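/- arXiv:2107.09326 — 5 statements merged into one kernel-verified Lean document; each statement's English description precedes it below -/
import Mathlib

section
/- For any exponential sum P(t) = Σ_{j=1}^ℓ c_j e^{i t x_j} with real frequencies x_j and complex coefficients c_j, and any intervals Ω ⊆ I of positive Lebesgue measure, the sup-norm of P on I is at most (4e·μ(I)/μ(Ω))^{ℓ-1} times the sup-norm of P on Ω (Turán's inequality). -/
/-!
Sampling `P` along an arithmetic progression `u + s h` turns it into the sequence
`a s = ∑ j, b j * p j ^ s` with `|p j| = 1`. Such a sequence is controlled by its first `ℓ` values:
`a (s + 1) - p_ℓ * a s` is a sequence of the same kind with one term fewer, which gives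
`|a M| ≤ (∑_{k<ℓ} C(M, k) 2^k) · max_{s<ℓ} |a s|` by induction on `ℓ`. Taking `h = μ(Ω)/ℓ`, the
first `ℓ` nodes lie in `Ω` while any `t ∈ I` is reached after `M ≤ ℓ μ(I)/μ(Ω)` steps, and the
estimate `∑_{k<ℓ} C(M, k) 2^k ≤ r^{1-ℓ} (1 + 2r)^M` with `r = μ(Ω)/(4 μ(I))` gives the constant.
-/

open Finset Set

theorem sum_range_choose_eq_choose_succ (M k : ℕ) :
    ∑ n ∈ range M, n.choose k = M.choose (k + 1) := by
  induction M with
  | zero => simp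
  | succ M ih => rw [sum_range_succ, ih, Nat.choose_succ_succ', add_comm]

theorem one_add_two_mul_sum_sum_choose (ℓ M : ℕ) :
    1 + 2 * ∑ n ∈ range M, ∑ k ∈ range ℓ, (n.choose k : ℝ) * 2 ^ k =
      ∑ k ∈ range (ℓ + 1), (M.choose k : ℝ) * 2 ^ k := by
  rw [sum_comm, sum_range_succ', mul_sum]
  simp only [← sum_mul, ← Nat.cast_sum, sum_range_choose_eq_choose_succ]
  simp [pow_succ, add_comm, mul_comm, mul_left_comm]

section ExponentialSequence

variable {𝕜 : Type*} [NormedField 𝕜]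

theorem norm_le_add_sum_of_norm_sub_mul_le {u : ℕ → 𝕜} {q : 𝕜} (hq : ‖q‖ ≤ 1) {d : ℕ → ℝ}
    (hd : ∀ n, ‖u (n + 1) - q * u n‖ ≤ d n) (M : ℕ) :
    ‖u M‖ ≤ ‖u 0‖ + ∑ n ∈ range M, d n := by
  induction M with
  | zero => simp
  | succ M ih =>
    calc ‖u (M + 1)‖ = ‖q * u M + (u (M + 1) - q * u M)‖ := by ring_nf
      _ ≤ ‖q‖ * ‖u M‖ + d M := by grw [norm_add_le, norm_mul, hd]
      _ ≤ ‖u M‖ + d M := by gcongr; exact mul_le_of_le_one_left (norm_nonneg _) hq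
      _ ≤ ‖u 0‖ + ∑ n ∈ range (M + 1), d n := by rw [sum_range_succ]; linarith

theorem sum_mul_pow_succ_sub_mul_sum_mul_pow {ℓ : ℕ} (b p : Fin (ℓ + 1) → 𝕜) (s : ℕ) :
    ∑ j, b j * p j ^ (s + 1) - p (Fin.last ℓ) * ∑ j, b j * p j ^ s =
      ∑ j : Fin ℓ, b j.castSucc * (p j.castSucc - p (Fin.last ℓ)) * p j.castSucc ^ s := by
  have hsplit : ∑ j : Fin ℓ, b j.castSucc * (p j.castSucc - p (Fin.last ℓ)) * p j.castSucc ^ s =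
      ∑ j : Fin ℓ, b j.castSucc * p j.castSucc ^ (s + 1) -
        ∑ j : Fin ℓ, p (Fin.last ℓ) * (b j.castSucc * p j.castSucc ^ s) := by
    rw [← sum_sub_distrib]
    exact sum_congr rfl fun j _ => by ring
  rw [hsplit, Fin.sum_univ_castSucc, Fin.sum_univ_castSucc, mul_add, mul_sum]
  ring

theorem norm_sum_mul_pow_le {ℓ : ℕ} (b p : Fin ℓ → 𝕜) (hp : ∀ j, ‖p j‖ ≤ 1) {S : ℝ}
    (hS : ∀ s < ℓ, ‖∑ j, b j * p j ^ s‖ ≤ S) (M : ℕ) :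
    ‖∑ j, b j * p j ^ M‖ ≤ (∑ k ∈ range ℓ, (M.choose k : ℝ) * 2 ^ k) * S := by
  induction ℓ generalizing S M with
  | zero => simp
  | succ ℓ ih =>
    set q := p (Fin.last ℓ)
    have hdiff : ∀ s < ℓ, ‖∑ j : Fin ℓ, b j.castSucc * (p j.castSucc - q) * p j.castSucc ^ s‖
        ≤ 2 * S := by
      intro s hs
      rw [← sum_mul_pow_succ_sub_mul_sum_mul_pow]
      calc _ ≤ ‖∑ j, b j * p j ^ (s + 1)‖ + ‖q‖ * ‖∑ j, b j * p j ^ s‖ := by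
            grw [norm_sub_le, norm_mul]
        _ ≤ S + 1 * S := by
            gcongr
            · exact hS _ (by omega)
            · exact hp _
            · exact hS _ (by omega)
        _ = 2 * S := by ring
    calc ‖∑ j, b j * p j ^ M‖
        ≤ ‖∑ j, b j * p j ^ 0‖ + ∑ n ∈ range M,
            (∑ k ∈ range ℓ, (n.choose k : ℝ) * 2 ^ k) * (2 * S) := by
          refine norm_le_add_sum_of_norm_sub_mul_le (u := fun s => ∑ j, b j * p j ^ s)
            (hp (Fin.last ℓ)) (fun n => ?_) M
          rw [sum_mul_pow_succ_sub_mul_sum_mul_pow]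
          exact ih _ _ (fun j => hp _) hdiff n
      _ ≤ S + ∑ n ∈ range M, (∑ k ∈ range ℓ, (n.choose k : ℝ) * 2 ^ k) * (2 * S) := by
          grw [hS 0 (by omega)]
      _ = _ := by
          rw [← one_add_two_mul_sum_sum_choose, ← sum_mul]; ring

end ExponentialSequence

theorem sum_choose_mul_two_pow_mul_pow_le_exp (m M : ℕ) {r : ℝ} (hr0 : 0 ≤ r) (hr1 : r ≤ 1) :
    (∑ k ∈ range (m + 1), (M.choose k : ℝ) * 2 ^ k) * r ^ m ≤ Real.exp (2 * r * M) := by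
  calc (∑ k ∈ range (m + 1), (M.choose k : ℝ) * 2 ^ k) * r ^ m
      ≤ ∑ k ∈ range (m + 1), (2 * r) ^ k * 1 ^ (M - k) * (M.choose k : ℝ) := by
        rw [sum_mul]
        refine sum_le_sum fun k hk => ?_
        have hrk : r ^ m ≤ r ^ k :=
          pow_le_pow_of_le_one hr0 hr1 (by simpa [Nat.lt_succ_iff] using hk)
        calc (M.choose k : ℝ) * 2 ^ k * r ^ m ≤ (M.choose k : ℝ) * 2 ^ k * r ^ k := by gcongr
          _ = _ := by ring
    _ ≤ ∑ k ∈ range (m + M + 1), (2 * r) ^ k * 1 ^ (M - k) * (M.choose k : ℝ) :=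
        sum_le_sum_of_subset_of_nonneg (range_subset_range.mpr (by omega))
          fun _ _ _ => by positivity
    _ = ∑ k ∈ range (M + 1), (2 * r) ^ k * 1 ^ (M - k) * (M.choose k : ℝ) := by
        refine (sum_subset (range_subset_range.mpr (by omega)) fun k _ hk => ?_).symm
        rw [Nat.choose_eq_zero_of_lt (by simpa using hk), Nat.cast_zero, mul_zero]
    _ = (2 * r + 1) ^ M := (add_pow _ _ _).symm
    _ ≤ Real.exp (2 * r) ^ M := by gcongr; exact Real.add_one_le_exp _
    _ = Real.exp (2 * r * M) := by rw [← Real.exp_nat_mul]; ring_nf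

theorem sum_choose_mul_two_pow_le (ℓ M : ℕ) {L : ℝ} (hL : 1 ≤ L) (hM : M ≤ ℓ * L) :
    ∑ k ∈ range ℓ, (M.choose k : ℝ) * 2 ^ k ≤ (4 * Real.exp 1 * L) ^ (ℓ - 1) := by
  rcases ℓ with _ | _ | m
  · simp
  · simp
  have hL0 : 0 < L := by linarith
  have hr := sum_choose_mul_two_pow_mul_pow_le_exp (m + 1) M (r := 1 / (4 * L))
    (by positivity) (by rw [div_le_one (by positivity)]; linarith)
  have hexp : Real.exp (2 * (1 / (4 * L)) * M) ≤ Real.exp 1 ^ (m + 1) := by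
    rw [← Real.exp_nat_mul, Real.exp_le_exp, mul_one]
    push_cast at hM ⊢
    rw [show 2 * (1 / (4 * L)) * (M : ℝ) = M / (2 * L) by field_simp; ring,
      div_le_iff₀ (by positivity)]
    nlinarith
  rw [Nat.add_sub_cancel]
  calc _ ≤ Real.exp 1 ^ (m + 1) / (1 / (4 * L)) ^ (m + 1) := by
        rw [le_div_iff₀ (by positivity)]; exact hr.trans hexp
    _ = _ := by rw [← div_pow]; congr 1; field_simp


theorem exists_progression_mem_Icc_of_le {ℓ : ℕ} {a' b' h t : ℝ} (hh : 0 < h)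
    (hb' : a' + ℓ * h = b') (ht : a' ≤ t) :
    ∃ M : ℕ, (∀ s < ℓ, t - M * h + s * h ∈ Icc a' b') ∧ M * h ≤ t - a' := by
  set M := ⌊(t - a') / h⌋₊
  have hM : M * h ≤ t - a' := (le_div_iff₀ hh).mp (Nat.floor_le (div_nonneg (by linarith) hh.le))
  have hM' : t - a' < (M + 1) * h := (div_lt_iff₀ hh).mp (Nat.lt_floor_add_one _)
  refine ⟨M, fun s hs => ⟨?_, ?_⟩, hM⟩
  · nlinarith [(Nat.cast_nonneg s : (0 : ℝ) ≤ s)]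
  · have : (s : ℝ) + 1 ≤ ℓ := by exact_mod_cast hs
    nlinarith

theorem exists_progression_mem_Icc {ℓ : ℕ} (hℓ : 0 < ℓ) {a b a' b' t : ℝ}
    (hsub : Icc a' b' ⊆ Icc a b) (hpos : a' < b') (ht : t ∈ Icc a b) :
    ∃ u h : ℝ, ∃ M : ℕ, u + M * h = t ∧ (∀ s < ℓ, u + s * h ∈ Icc a' b') ∧
      M * (b' - a') ≤ ℓ * (b - a) := by
  have ha : a ≤ a' := (hsub ⟨le_rfl, hpos.le⟩).1
  have hb : b' ≤ b := (hsub ⟨hpos.le, le_rfl⟩).2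
  set h := (b' - a') / ℓ
  have hh : 0 < h := div_pos (by linarith) (by exact_mod_cast hℓ)
  have hδ : b' - a' = ℓ * h := (mul_div_cancel₀ _ (by positivity)).symm
  rcases le_total a' t with hta | hta
  · obtain ⟨M, hnodes, hM⟩ :=
      exists_progression_mem_Icc_of_le (ℓ := ℓ) (b' := b') hh (by linarith) hta
    refine ⟨t - M * h, h, M, by ring, hnodes, ?_⟩
    rw [hδ]
    nlinarith [ht.2, (Nat.cast_nonneg ℓ : (0 : ℝ) ≤ ℓ)]
  · -- the same construction for the mirror images of `t` and `Ω`
    obtain ⟨M, hnodes, hM⟩ :=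
      exists_progression_mem_Icc_of_le (a' := -b') (b' := -a') (t := -t) hh (by linarith)
        (by linarith [hpos])
    refine ⟨t + M * h, -h, M, by ring, fun s hs => ?_, ?_⟩
    · obtain ⟨h1, h2⟩ := hnodes s hs
      constructor <;> linarith
    · rw [hδ]
      nlinarith [ht.1, (Nat.cast_nonneg ℓ : (0 : ℝ) ≤ ℓ)]

theorem sum_mul_exp_add_nat_mul {ι : Type*} [Fintype ι] (c : ι → ℂ) (x : ι → ℝ) (u h : ℝ)
    (s : ℕ) :
    ∑ j, c j * Complex.exp (Complex.I * ↑(u + s * h) * x j) =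
      ∑ j, c j * Complex.exp (Complex.I * u * x j) * Complex.exp (Complex.I * ↑(h * x j)) ^ s := by
  refine Finset.sum_congr rfl fun j _ => ?_
  rw [← Complex.exp_nat_mul, mul_assoc (c j), ← Complex.exp_add]
  push_cast
  ring_nf

theorem turan_inequality_general (ℓ : ℕ) (c : Fin ℓ → ℂ) (x : Fin ℓ → ℝ)
    (a b a' b' : ℝ) (hsub : Set.Icc a' b' ⊆ Set.Icc a b) (hpos : a' < b') :
    ∀ t ∈ Set.Icc a b,
      ‖∑ j, c j * Complex.exp (Complex.I * t * x j)‖ ≤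
        (4 * Real.exp 1 * (b - a) / (b' - a')) ^ (ℓ - 1) *
          sSup ((fun t : ℝ => ‖∑ j, c j * Complex.exp (Complex.I * t * x j)‖) ''
            Set.Icc a' b') := by
  intro t ht
  set S := sSup ((fun t : ℝ => ‖∑ j, c j * Complex.exp (Complex.I * t * x j)‖) '' Icc a' b')
  have hS : ∀ s ∈ Icc a' b', ‖∑ j, c j * Complex.exp (Complex.I * s * x j)‖ ≤ S :=
    fun s hs => le_csSup (isCompact_Icc.bddAbove_image (by fun_prop)) (mem_image_of_mem _ hs)
  rcases Nat.eq_zero_or_pos ℓ with rfl | hℓ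
  · simpa using (norm_nonneg _).trans (hS a' ⟨le_rfl, hpos.le⟩)
  obtain ⟨u, h, M, rfl, hnodes, hM⟩ := exists_progression_mem_Icc hℓ hsub hpos ht
  have hL : 1 ≤ (b - a) / (b' - a') := by
    rw [one_le_div (by linarith)]
    linarith [(hsub ⟨le_rfl, hpos.le⟩).1, (hsub ⟨hpos.le, le_rfl⟩).2]
  rw [sum_mul_exp_add_nat_mul, mul_div_assoc]
  calc _ ≤ (∑ k ∈ range ℓ, (M.choose k : ℝ) * 2 ^ k) * S :=
        norm_sum_mul_pow_le _ _ (fun j => (Complex.norm_exp_I_mul_ofReal _).le)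
          (fun s hs => sum_mul_exp_add_nat_mul c x u h s ▸ hS _ (hnodes s hs)) M
    _ ≤ _ := by
        gcongr
        · exact (norm_nonneg _).trans (hS _ (hnodes 0 hℓ))
        · refine sum_choose_mul_two_pow_le ℓ M hL ?_
          rw [mul_div_assoc', le_div_iff₀ (by linarith)]
          exact hM

/-- **Turán's inequality** for exponential sums: if `P(t) = ∑ c_j e^{i t x_j}` is an
exponential sum of degree at most `ℓ` with distinct real frequencies, and `Ω ⊆ I` are
intervals of positive measure, then
`‖P‖_{L∞(I)} ≤ (4e μ(I)/μ(Ω))^{ℓ-1} ‖P‖_{L∞(Ω)}`. -/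
theorem turan_inequality (ℓ : ℕ) (c : Fin ℓ → ℂ) (x : Fin ℓ → ℝ)
    (hx : Function.Injective x)
    (a b a' b' : ℝ) (hsub : Set.Icc a' b' ⊆ Set.Icc a b) (hpos : a' < b') :
    ∀ t ∈ Set.Icc a b,
      ‖∑ j, c j * Complex.exp (Complex.I * t * x j)‖ ≤
        (4 * Real.exp 1 * (b - a) / (b' - a')) ^ (ℓ - 1) *
          sSup ((fun t : ℝ => ‖∑ j, c j * Complex.exp (Complex.I * t * x j)‖) ''
            Set.Icc a' b') :=
  turan_inequality_general ℓ c x a b a' b' hsub hpos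
end

section
/- Let x_1,…,x_ℓ ∈ (−π,π] be points whose pairwise wrap-around distances all lie in [Δ, τΔ], and let N ≤ 4π/Δ. Then for any c ∈ ℂ^ℓ, the normalized L² norm of P(t) = Σ c_j e^{i t x_j} over [0,N] is at least (2/(πℓ))·(NΔ/(16πe))^{ℓ−1} times its normalized L² norm over [0, 4π/Δ]. -/
/-!
Turán's lemma: for unit complex numbers `z₁, …, zₙ` and any `m`, the polynomial
`Q = X ^ (m + 1) * R`, where `R` interpolates `w⁻¹ ^ (m + 1)` at the nodes, equals `1` at every
node and has its coefficients in degrees `m + 1, …, m + n`. In Newton's form of `R` the divided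
differences of `w⁻¹ ^ (m + 1)` at unit nodes are bounded by binomial coefficients (Leibniz rule
against the factor `w`), so these coefficients have `ℓ¹`-norm at most `K = 2 ^ (n-1) C(m+n, n-1)`,
and Cauchy–Schwarz gives `|∑ b_j|² ≤ K² ∑_ν |∑ b_j z_j^ν|²`.

With `z_j = exp (-i s x_j / D)` and `b_j = c_j exp (i s x_j)` this bounds `|P(s)|²` by `K²` times
the sum of `|P(a_ν s)|²` over the `n` time rescalings `a_ν = 1 - ν / D ∈ [n / D, N / T]`, where
`T = 4π/Δ` and `D = m + 2n`. Integrating over `[0, T]` and rescaling each term back into `[0, N]`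
gives `∫₀ᵀ |P|² ≤ K² D ∫₀ᴺ |P|²`. Choosing `D` between `(2n - 1) T / N` and `2n T / N`, the
bound `(k + 1) ^ k ≤ e ^ k k!` makes the constant `K² D` at most `T / N` times the inverse square
of the claimed factor.
-/

/-- Wrap-around distance on the circle. -/
noncomputable def wdist (x y : ℝ) : ℝ := |Complex.arg (Complex.exp (Complex.I * (x - y)))|

open Finset Polynomial

theorem norm_sum_mul_sq_le {R ι : Type*} [SeminormedRing R] (s : Finset ι) (r a : ι → R) :
    ‖∑ i ∈ s, r i * a i‖ ^ 2 ≤ (∑ i ∈ s, ‖r i‖) ^ 2 * ∑ i ∈ s, ‖a i‖ ^ 2 :=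
  calc ‖∑ i ∈ s, r i * a i‖ ^ 2 ≤ (∑ i ∈ s, ‖r i‖ * ‖a i‖) ^ 2 := by
        gcongr
        exact (norm_sum_le _ _).trans (sum_le_sum fun i _ => norm_mul_le _ _)
    _ ≤ (∑ i ∈ s, ‖r i‖ ^ 2) * ∑ i ∈ s, ‖a i‖ ^ 2 := sum_mul_sq_le_sq_mul_sq _ _ _
    _ ≤ (∑ i ∈ s, ‖r i‖) ^ 2 * ∑ i ∈ s, ‖a i‖ ^ 2 := by
        gcongr
        exact sum_sq_le_sq_sum_of_nonneg fun i _ => norm_nonneg _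

namespace Polynomial

section L1Norm

variable {R : Type*} [SeminormedRing R]

noncomputable def l1Norm (p : R[X]) : ℝ := p.sum fun _ a => ‖a‖

theorem l1Norm_eq_sum_of_support_subset {p : R[X]} {s : Finset ℕ} (h : p.support ⊆ s) :
    l1Norm p = ∑ i ∈ s, ‖p.coeff i‖ :=
  sum_eq_of_subset _ (fun _ => norm_zero) h

theorem l1Norm_eq_sum_range {p : R[X]} {n : ℕ} (hn : p.natDegree < n) :
    l1Norm p = ∑ i ∈ range n, ‖p.coeff i‖ :=
  l1Norm_eq_sum_of_support_subset (supp_subset_range hn)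

theorem l1Norm_nonneg (p : R[X]) : 0 ≤ l1Norm p :=
  sum_nonneg fun _ _ => norm_nonneg _

theorem l1Norm_zero : l1Norm (0 : R[X]) = 0 := sum_zero_index _

theorem l1Norm_monomial (n : ℕ) (a : R) : l1Norm (monomial n a) = ‖a‖ :=
  sum_monomial_index _ _ norm_zero

theorem l1Norm_add_le (p q : R[X]) : l1Norm (p + q) ≤ l1Norm p + l1Norm q := by
  rw [l1Norm_eq_sum_of_support_subset support_add,
    l1Norm_eq_sum_of_support_subset subset_union_left,
    l1Norm_eq_sum_of_support_subset subset_union_right, ← sum_add_distrib]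
  exact sum_le_sum fun i _ => by rw [coeff_add]; exact norm_add_le _ _

theorem l1Norm_sum_le {ι : Type*} (s : Finset ι) (p : ι → R[X]) :
    l1Norm (∑ i ∈ s, p i) ≤ ∑ i ∈ s, l1Norm (p i) :=
  le_sum_of_subadditive l1Norm l1Norm_zero.le l1Norm_add_le s p

theorem l1Norm_mul_le (p q : R[X]) : l1Norm (p * q) ≤ l1Norm p * l1Norm q := by
  rw [mul_eq_sum_sum]
  conv_rhs => rw [l1Norm, Polynomial.sum_def, sum_mul]
  refine (l1Norm_sum_le _ _).trans (sum_le_sum fun i _ => ?_)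
  rw [Polynomial.sum_def]
  conv_rhs => rw [l1Norm, Polynomial.sum_def, mul_sum]
  refine (l1Norm_sum_le _ _).trans (sum_le_sum fun j _ => ?_)
  rw [l1Norm_monomial]
  exact norm_mul_le _ _

theorem l1Norm_C_mul_le (a : R) (p : R[X]) : l1Norm (C a * p) ≤ ‖a‖ * l1Norm p := by
  simpa only [← monomial_zero_left, l1Norm_monomial] using l1Norm_mul_le (C a) p

theorem l1Norm_X_sub_C [NormOneClass R] (a : R) : l1Norm (X - C a) = 1 + ‖a‖ := by
  rw [l1Norm_eq_sum_range (n := 2) ((natDegree_X_sub_C_le a).trans_lt one_lt_two)]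
  simp [sum_range_succ, coeff_X, coeff_C, add_comm]

end L1Norm

theorem l1Norm_nodal_le {R : Type*} [NormedCommRing R] [NormOneClass R] {ι : Type*}
    (s : Finset ι) (v : ι → R) (hv : ∀ i ∈ s, ‖v i‖ ≤ 1) :
    l1Norm (Lagrange.nodal s v) ≤ 2 ^ #s := by
  classical
  induction s using Finset.induction_on with
  | empty => simp [l1Norm_eq_sum_range (n := 1)]
  | insert i s hi ih =>
    rw [Lagrange.nodal_insert_eq_nodal hi, card_insert_of_notMem hi, pow_succ']
    refine (l1Norm_mul_le _ _).trans (mul_le_mul ?_ (ih fun j hj => hv j (mem_insert_of_mem hj))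
      (l1Norm_nonneg _) zero_le_two)
    rw [l1Norm_X_sub_C]
    linarith [hv i (mem_insert_self i s)]

end Polynomial

section DividedDifference

open Lagrange

variable {F : Type*} [Field F] [DecidableEq F]

noncomputable def dividedDiff (g : F → F) (s : Finset F) : F :=
  ∑ z ∈ s, g z / ∏ y ∈ s.erase z, (z - y)

theorem dividedDiff_congr {g g' : F → F} {s : Finset F} (h : ∀ z ∈ s, g z = g' z) :
    dividedDiff g s = dividedDiff g' s :=
  sum_congr rfl fun z hz => by rw [h z hz]

@[simp]
theorem dividedDiff_singleton (g : F → F) (z : F) : dividedDiff g {z} = g z := by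
  simp [dividedDiff]

theorem dividedDiff_eq_coeff_interpolate (g : F → F) (s : Finset F) :
    dividedDiff g s = (interpolate s id g).coeff (#s - 1) := by
  have hinj : Set.InjOn id (s : Set F) := Function.injective_id.injOn
  rw [coeff_eq_sum hinj (degree_interpolate_lt _ hinj), dividedDiff]
  exact sum_congr rfl fun z hz => by rw [eval_interpolate_at_node _ hinj hz]; rfl

theorem dividedDiff_const {s : Finset F} (hs : 1 < #s) (a : F) :
    dividedDiff (fun _ => a) s = 0 := by
  have hC : interpolate s id (fun _ => a) = C a :=
    (eq_interpolate_of_eval_eq _ Function.injective_id.injOn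
      (degree_C_le.trans_lt (by exact_mod_cast hs.trans' zero_lt_one)) fun _ _ => eval_C).symm
  rw [dividedDiff_eq_coeff_interpolate, hC, coeff_C, if_neg (by omega)]

theorem dividedDiff_sub_mul (g : F → F) (c : F) {s : Finset F} {z₀ : F} (hz₀ : z₀ ∈ s) :
    dividedDiff (fun w => (w - c) * g w) s =
      (z₀ - c) * dividedDiff g s + dividedDiff g (s.erase z₀) := by
  have hsplit : ∀ z ∈ s, (z - c) * g z / ∏ y ∈ s.erase z, (z - y) =
      (z₀ - c) * (g z / ∏ y ∈ s.erase z, (z - y)) + (z - z₀) * g z / ∏ y ∈ s.erase z, (z - y) :=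
    fun z _ => by ring
  rw [dividedDiff, sum_congr rfl hsplit, sum_add_distrib, ← mul_sum,
    ← add_sum_erase s (fun z => (z - z₀) * g z / ∏ y ∈ s.erase z, (z - y)) hz₀,
    sub_self, zero_mul, zero_div, zero_add]
  refine congrArg _ (sum_congr rfl fun z hz => ?_)
  have hz₀' : z₀ ∈ s.erase z := mem_erase.2 ⟨(ne_of_mem_erase hz).symm, hz₀⟩
  rw [← mul_prod_erase _ _ hz₀', erase_right_comm,
    mul_div_mul_left _ _ (sub_ne_zero.2 (ne_of_mem_erase hz))]

theorem interpolate_insert (g : F → F) {s : Finset F} {v : F} (hv : v ∉ s) :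
    interpolate (insert v s) id g =
      interpolate s id g + C (dividedDiff g (insert v s)) * nodal s id := by
  have hinj : ∀ t : Finset F, Set.InjOn id (t : Set F) := fun _ => Function.injective_id.injOn
  rw [← sub_eq_iff_eq_add]
  refine eq_interpolate_of_eval_eq g (hinj s) ?_ fun z hz => ?_
  · rw [degree_lt_iff_coeff_zero]
    intro k hk
    rw [coeff_sub, coeff_C_mul]
    rcases hk.eq_or_lt with rfl | hk
    · rw [dividedDiff_eq_coeff_interpolate, card_insert_of_notMem hv, Nat.add_sub_cancel,
        ← natDegree_nodal (s := s) (v := id), nodal_monic.coeff_natDegree, mul_one, sub_self]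
    · rw [coeff_eq_zero_of_degree_lt ((degree_interpolate_lt _ (hinj _)).trans_le ?_),
        coeff_eq_zero_of_natDegree_lt (natDegree_nodal.trans_lt hk), mul_zero, sub_zero]
      rw [card_insert_of_notMem hv]
      exact_mod_cast hk
  · rw [eval_sub, eval_mul, eval_interpolate_at_node _ (hinj _) (mem_insert_of_mem hz),
      eval_nodal_at_node hz, mul_zero, sub_zero]

end DividedDifference

theorem sum_range_two_pow_mul_choose_le (m n : ℕ) :
    ∑ k ∈ range n, 2 ^ k * ((m + k).choose k : ℝ) ≤ 2 ^ (n - 1) * (m + n).choose (n - 1) := by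
  cases n with
  | zero => simp
  | succ n =>
    calc ∑ k ∈ range (n + 1), 2 ^ k * ((m + k).choose k : ℝ)
        ≤ ∑ k ∈ range (n + 1), 2 ^ n * ((k + m).choose m : ℝ) :=
          sum_le_sum fun k hk => by
            rw [add_comm k, Nat.choose_symm_add]
            gcongr
            · norm_num
            · exact Nat.lt_succ_iff.1 (mem_range.1 hk)
      _ = 2 ^ (n + 1 - 1) * (m + (n + 1)).choose (n + 1 - 1) := by
          rw [← mul_sum, ← Nat.cast_sum, Nat.sum_range_add_choose, Nat.add_sub_cancel,
            show n + m + 1 = (m + 1) + n by ring, Nat.choose_symm_add,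
            show m + 1 + n = m + (n + 1) by ring]

section Turan

open Lagrange

variable {𝕜 : Type*} [NormedField 𝕜] [DecidableEq 𝕜]

theorem norm_dividedDiff_inv_pow_le (k : ℕ) {s : Finset 𝕜} (hs : s.Nonempty)
    (hu : ∀ z ∈ s, ‖z‖ = 1) :
    ‖dividedDiff (fun w => w⁻¹ ^ k) s‖ ≤ (k + #s - 2).choose (#s - 1) := by
  induction k generalizing s with
  | zero =>
    rcases hs.exists_eq_singleton_or_nontrivial with ⟨z, rfl⟩ | hs2
    · simp
    · simp only [pow_zero, dividedDiff_const (one_lt_card_iff_nontrivial.2 hs2), norm_zero]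
      positivity
  | succ k ih =>
    induction s using Finset.strongInduction with
    | H s ihs =>
    rcases hs.exists_eq_singleton_or_nontrivial with ⟨z, rfl⟩ | hs2
    · simp [hu z (mem_singleton_self z)]
    obtain ⟨z₀, hz₀⟩ := hs
    obtain ⟨n, hn⟩ : ∃ n, #s = n + 2 :=
      Nat.exists_eq_add_of_le' (one_lt_card_iff_nontrivial.2 hs2)
    have hA := ih ⟨z₀, hz₀⟩ hu
    have hB := ihs _ (erase_ssubset hz₀) (hs2.erase_nonempty)
      fun z hz => hu z (mem_of_mem_erase hz)
    rw [card_erase_of_mem hz₀, hn, show k + 1 + (n + 2 - 1) - 2 = k + n by omega,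
      show n + 2 - 1 - 1 = n by omega] at hB
    rw [hn, show k + (n + 2) - 2 = k + n by omega, show n + 2 - 1 = n + 1 by omega] at hA
    rw [hn]
    have hrec := dividedDiff_sub_mul (fun w => w⁻¹ ^ (k + 1)) 0 hz₀
    rw [dividedDiff_congr (g' := fun w => w⁻¹ ^ k) fun z hz => by
      rw [sub_zero, pow_succ, ← mul_assoc, mul_comm, ← mul_assoc,
        inv_mul_cancel₀ (norm_ne_zero_iff.1 (by rw [hu z hz]; exact one_ne_zero)), one_mul]] at hrec
    calc ‖dividedDiff (fun w => w⁻¹ ^ (k + 1)) s‖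
        = ‖dividedDiff (fun w => w⁻¹ ^ k) s -
            dividedDiff (fun w => w⁻¹ ^ (k + 1)) (s.erase z₀)‖ := by
          rw [hrec, add_sub_cancel_right, sub_zero, norm_mul, hu z₀ hz₀, one_mul]
      _ ≤ (k + n).choose (n + 1) + (k + n).choose n :=
          (norm_sub_le _ _).trans (add_le_add hA hB)
      _ = (k + 1 + (n + 2) - 2).choose (n + 2 - 1) := by
          rw [show k + 1 + (n + 2) - 2 = k + n + 1 by omega, show n + 2 - 1 = n + 1 by omega,
            Nat.choose_succ_succ', Nat.cast_add, add_comm]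

theorem l1Norm_interpolate_inv_pow_le (m : ℕ) {s : Finset 𝕜} (hu : ∀ z ∈ s, ‖z‖ = 1) :
    l1Norm (interpolate s id fun w => w⁻¹ ^ (m + 1)) ≤
      ∑ k ∈ range #s, 2 ^ k * ((m + k).choose k : ℝ) := by
  induction s using Finset.induction_on with
  | empty => simp [l1Norm_zero]
  | insert a s ha ih =>
    have hu' : ∀ z ∈ s, ‖z‖ = 1 := fun z hz => hu z (mem_insert_of_mem hz)
    have hdd := norm_dividedDiff_inv_pow_le (m + 1) (insert_nonempty a s) hu
    rw [card_insert_of_notMem ha, show m + 1 + (#s + 1) - 2 = m + #s by omega,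
      Nat.add_sub_cancel] at hdd
    rw [interpolate_insert _ ha, card_insert_of_notMem ha, sum_range_succ]
    refine (l1Norm_add_le _ _).trans (add_le_add (ih hu') ?_)
    have hnodal := l1Norm_nodal_le s id fun z hz => (hu' z hz).le
    refine (l1Norm_C_mul_le _ _).trans ?_
    rw [mul_comm (2 ^ #s : ℝ)]
    exact mul_le_mul hdd hnodal (l1Norm_nonneg _) (by positivity)

theorem norm_sum_sq_le_turan {ι : Type*} [Fintype ι] [Nonempty ι] {z : ι → 𝕜}
    (hz : ∀ j, ‖z j‖ = 1) (m : ℕ) (b : ι → 𝕜) :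
    ‖∑ j, b j‖ ^ 2 ≤
      (2 ^ (Fintype.card ι - 1) * (m + Fintype.card ι).choose (Fintype.card ι - 1)) ^ 2 *
        ∑ t ∈ range (Fintype.card ι), ‖∑ j, b j * z j ^ (m + 1 + t)‖ ^ 2 := by
  set n := Fintype.card ι
  set V := univ.image z
  set R := interpolate V id fun w => w⁻¹ ^ (m + 1)
  have hinj : Set.InjOn id (V : Set 𝕜) := Function.injective_id.injOn
  have hV : #V ≤ n := card_image_le
  have hVpos : 0 < #V := (univ_nonempty.image z).card_pos
  have hR : R.natDegree < n :=
    (natDegree_le_of_degree_le (degree_interpolate_le _ hinj)).trans_lt (by omega)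
  have hnode : ∀ j, ∑ t ∈ range n, R.coeff t * z j ^ (m + 1 + t) = 1 := fun j => by
    have hval := eval_interpolate_at_node (fun w => w⁻¹ ^ (m + 1)) hinj
      (mem_image_of_mem z (mem_univ j))
    rw [eval_eq_sum_range' hR, id_eq] at hval
    have hzj : z j ≠ 0 := norm_ne_zero_iff.1 (by rw [hz j]; exact one_ne_zero)
    simp_rw [pow_add (z j) (m + 1), ← mul_assoc, mul_comm _ (z j ^ (m + 1)), mul_assoc, ← mul_sum]
    rw [hval, inv_pow, mul_inv_cancel₀ (pow_ne_zero _ hzj)]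
  have hrep : ∑ j, b j = ∑ t ∈ range n, R.coeff t * ∑ j, b j * z j ^ (m + 1 + t) := by
    calc ∑ j, b j = ∑ j, b j * ∑ t ∈ range n, R.coeff t * z j ^ (m + 1 + t) := by
          simp only [hnode, mul_one]
      _ = _ := by
          simp_rw [mul_sum]
          rw [sum_comm]
          exact sum_congr rfl fun _ _ => sum_congr rfl fun _ _ => by ring
  have hl1 : ∑ t ∈ range n, ‖R.coeff t‖ ≤ 2 ^ (n - 1) * (m + n).choose (n - 1) := by
    rw [← l1Norm_eq_sum_range hR]
    refine (l1Norm_interpolate_inv_pow_le m ?_).trans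
      ((sum_le_sum_of_subset_of_nonneg (range_subset_range.2 hV) fun _ _ _ => by positivity).trans
        (sum_range_two_pow_mul_choose_le m n))
    simpa [V] using fun j => hz j
  rw [hrep]
  refine (norm_sum_mul_sq_le _ _ _).trans (mul_le_mul_of_nonneg_right ?_ (by positivity))
  gcongr

end Turan

open Real
open scoped Nat

theorem succ_div_exp_pow_le_factorial (k : ℕ) : ((k + 1) / exp 1) ^ k ≤ k ! := by
  induction k with
  | zero => simp
  | succ k ih =>
    calc ((((k + 1 : ℕ) : ℝ) + 1) / exp 1) ^ (k + 1)
        = (1 + ((k + 1 : ℕ) : ℝ)⁻¹) ^ (k + 1) * (((k + 1) / exp 1) ^ k * ((k + 1) / exp 1)) := by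
          rw [← pow_succ, ← mul_pow]
          congr 1
          push_cast
          field_simp
      _ ≤ exp 1 * (k ! * ((k + 1) / exp 1)) := by
          gcongr
          exact one_add_inv_pow_le_exp
      _ = (k + 1 : ℕ) ! := by
          rw [Nat.factorial_succ]
          push_cast
          field_simp

theorem turan_constant_le {n m : ℕ} (hn : 1 ≤ n) {ρ : ℝ} (hρ : 0 < ρ)
    (hD : (m + 2 * n : ℝ) ≤ 2 * n * ρ) :
    (2 / (π * n) * (1 / (4 * exp 1 * ρ)) ^ (n - 1)) ^ 2 *
      (2 ^ (n - 1) * (m + n).choose (n - 1)) ^ 2 * (m + 2 * n) ≤ ρ := by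
  obtain ⟨k, rfl⟩ : ∃ k, n = k + 1 := ⟨n - 1, by omega⟩
  rw [Nat.add_sub_cancel]
  push_cast at hD ⊢
  have hchoose : ((m + (k + 1)).choose k : ℝ) ≤ (2 * (k + 1) * ρ) ^ k / k ! := by
    refine (Nat.choose_le_pow_div k _).trans ?_
    gcongr
    push_cast
    linarith
  set G := (1 / (4 * exp 1 * ρ)) ^ k * (2 ^ k * ((m + (k + 1)).choose k : ℝ))
  have hG : G ≤ 1 :=
    calc G ≤ (1 / (4 * exp 1 * ρ)) ^ k * (2 ^ k * ((2 * (k + 1) * ρ) ^ k / k !)) := by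
          simp only [G]
          gcongr
      _ = ((k + 1) / exp 1) ^ k / k ! := by
          rw [← mul_div_assoc, ← mul_div_assoc, ← mul_pow, ← mul_pow]
          congr 2
          field_simp
          ring
      _ ≤ 1 := div_le_one_of_le₀ (succ_div_exp_pow_le_factorial k) (by positivity)
  have hπ : 8 ≤ π ^ 2 * (k + 1) := by nlinarith [pi_gt_three]
  calc _ = (2 / (π * (k + 1))) ^ 2 * G ^ 2 * (m + 2 * (k + 1)) := by ring
    _ ≤ (2 / (π * (k + 1))) ^ 2 * 1 ^ 2 * (2 * (k + 1) * ρ) := by gcongr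
    _ = 8 / (π ^ 2 * (k + 1)) * ρ := by field_simp; ring
    _ ≤ ρ := mul_le_of_le_one_left hρ.le ((div_le_one (by positivity)).2 hπ)

theorem exists_nat_add_two_mul_mem_Icc {n : ℕ} (hn : 1 ≤ n) {ρ : ℝ} (hρ : 1 ≤ ρ) :
    ∃ m : ℕ, ((m : ℝ) + 2 * n) ∈ Set.Icc ((2 * n - 1) * ρ) (2 * n * ρ) := by
  have hn' : (1 : ℝ) ≤ n := by exact_mod_cast hn
  have hceil := Nat.ceil_lt_add_one (a := (2 * n - 1) * ρ) (by nlinarith)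
  refine ⟨⌈(2 * n - 1) * ρ⌉₊ - 2 * n, ?_⟩
  rcases le_total (2 * n) ⌈(2 * n - 1) * ρ⌉₊ with h | h
  · rw [Nat.cast_sub h]
    push_cast
    constructor <;> nlinarith [Nat.le_ceil ((2 * n - 1) * ρ)]
  · rw [Nat.sub_eq_zero_of_le h]
    have h' : (⌈(2 * n - 1) * ρ⌉₊ : ℝ) ≤ 2 * n := by exact_mod_cast h
    push_cast
    constructor <;> nlinarith [Nat.le_ceil ((2 * n - 1) * ρ)]

theorem integral_comp_mul_left_le {f : ℝ → ℝ} (hf : Continuous f) (hf0 : ∀ t, 0 ≤ f t) {a T N : ℝ}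
    (ha : 0 < a) (hT : 0 ≤ T) (haT : a * T ≤ N) :
    ∫ s in 0..T, f (a * s) ≤ a⁻¹ * ∫ s in 0..N, f s := by
  rw [intervalIntegral.integral_comp_mul_left _ ha.ne', mul_zero, smul_eq_mul]
  gcongr
  exact intervalIntegral.integral_mono_interval le_rfl (by positivity) haT
    (Filter.Eventually.of_forall fun t => hf0 t) (hf.intervalIntegrable _ _)

section ExpSum

variable {ι : Type*} [Fintype ι]

noncomputable def expSum (c : ι → ℂ) (x : ι → ℝ) (t : ℝ) : ℂ :=
  ∑ j, c j * Complex.exp (Complex.I * t * x j)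

theorem continuous_expSum (c : ι → ℂ) (x : ι → ℝ) : Continuous (expSum c x) := by
  unfold expSum
  fun_prop

theorem norm_expSum_sq_le [Nonempty ι] (c : ι → ℂ) (x : ι → ℝ) (m : ℕ) (D s : ℝ) :
    ‖expSum c x s‖ ^ 2 ≤
      (2 ^ (Fintype.card ι - 1) * (m + Fintype.card ι).choose (Fintype.card ι - 1)) ^ 2 *
        ∑ t ∈ range (Fintype.card ι), ‖expSum c x ((1 - (m + 1 + t : ℕ) / D) * s)‖ ^ 2 := by
  have hz : ∀ j, ‖Complex.exp (-(Complex.I * (s / D : ℝ) * x j))‖ = 1 := fun j => by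
    rw [Complex.norm_exp]
    simp
  refine (norm_sum_sq_le_turan hz m fun j => c j * Complex.exp (Complex.I * s * x j)).trans_eq ?_
  congr 1
  refine sum_congr rfl fun t _ => ?_
  rw [expSum]
  congr 2
  refine sum_congr rfl fun j _ => ?_
  rw [mul_assoc, ← Complex.exp_nat_mul, ← Complex.exp_add]
  congr 2
  push_cast
  ring

theorem integral_norm_expSum_sq_le [Nonempty ι] (c : ι → ℂ) (x : ι → ℝ) (m : ℕ) {T N : ℝ}
    (hT : 0 ≤ T) (hTN : (2 * Fintype.card ι - 1) * T ≤ (m + 2 * Fintype.card ι) * N) :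
    ∫ s in 0..T, ‖expSum c x s‖ ^ 2 ≤
      (2 ^ (Fintype.card ι - 1) * (m + Fintype.card ι).choose (Fintype.card ι - 1)) ^ 2 *
        (m + 2 * Fintype.card ι) * ∫ s in 0..N, ‖expSum c x s‖ ^ 2 := by
  set n := Fintype.card ι
  set K : ℝ := 2 ^ (n - 1) * (m + n).choose (n - 1)
  set D : ℝ := m + 2 * n
  set a : ℕ → ℝ := fun t => 1 - (m + 1 + t : ℕ) / D
  have hf : Continuous fun s => ‖expSum c x s‖ ^ 2 := (continuous_expSum c x).norm.pow 2
  have hn : (1 : ℝ) ≤ n := Nat.one_le_cast.2 Fintype.card_pos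
  have hD : 0 < D := by positivity
  have hN : 0 ≤ N := (mul_nonneg_iff_of_pos_left hD).1 (le_trans (by nlinarith) hTN)
  have ha : ∀ t ∈ range n, n / D ≤ a t ∧ a t * T ≤ N := fun t ht => by
    have ht : (t : ℝ) + 1 ≤ n := by exact_mod_cast mem_range.1 ht
    have hat : a t = (2 * n - 1 - t) / D := by
      simp only [a, D]
      push_cast
      field_simp
      ring
    rw [hat]
    refine ⟨div_le_div_of_nonneg_right (by linarith) hD.le, ?_⟩
    rw [div_mul_eq_mul_div, div_le_iff₀ hD]
    nlinarith
  calc ∫ s in 0..T, ‖expSum c x s‖ ^ 2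
      ≤ ∫ s in 0..T, K ^ 2 * ∑ t ∈ range n, ‖expSum c x (a t * s)‖ ^ 2 :=
        intervalIntegral.integral_mono_on hT (hf.intervalIntegrable _ _)
          ((continuous_const.mul (continuous_finsetSum _ fun t _ =>
            hf.comp (continuous_const_mul _))).intervalIntegrable _ _)
          fun s _ => norm_expSum_sq_le c x m D s
    _ = K ^ 2 * ∑ t ∈ range n, ∫ s in 0..T, ‖expSum c x (a t * s)‖ ^ 2 := by
        rw [intervalIntegral.integral_const_mul, intervalIntegral.integral_finsetSum]
        exact fun t _ => (hf.comp (continuous_const_mul (a t))).intervalIntegrable _ _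
    _ ≤ K ^ 2 * ∑ t ∈ range n, D / n * ∫ s in 0..N, ‖expSum c x s‖ ^ 2 := by
        gcongr with t ht
        have hat := (ha t ht).1
        have ha0 : 0 < a t := (by positivity : (0 : ℝ) < n / D).trans_le hat
        refine (integral_comp_mul_left_le hf (fun _ => by positivity) ha0 hT (ha t ht).2).trans ?_
        gcongr
        · exact intervalIntegral.integral_nonneg hN fun _ _ => by positivity
        · rw [← inv_div]
          exact inv_anti₀ (by positivity) hat
    _ = K ^ 2 * D * ∫ s in 0..N, ‖expSum c x s‖ ^ 2 := by
        rw [sum_const, card_range, nsmul_eq_mul]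
        field_simp

theorem sqrt_integral_norm_expSum_sq_ge [Nonempty ι] (c : ι → ℂ) (x : ι → ℝ) {T N : ℝ}
    (hN : 0 < N) (hNT : N ≤ T) :
    2 / (π * Fintype.card ι) * (1 / (4 * exp 1 * (T / N))) ^ (Fintype.card ι - 1) *
        √(1 / T * ∫ s in 0..T, ‖expSum c x s‖ ^ 2) ≤
      √(1 / N * ∫ s in 0..N, ‖expSum c x s‖ ^ 2) := by
  have hT : 0 < T := hN.trans_le hNT
  have hn : 1 ≤ Fintype.card ι := Fintype.card_pos
  obtain ⟨m, hm⟩ := exists_nat_add_two_mul_mem_Icc hn ((one_le_div hN).2 hNT)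
  have hint := integral_norm_expSum_sq_le c x m hT.le (N := N) (by
    have := mul_le_mul_of_nonneg_right hm.1 hN.le
    rwa [mul_assoc, div_mul_cancel₀ _ hN.ne'] at this)
  have hconst := turan_constant_le hn (div_pos hT hN) hm.2
  set A := ∫ s in 0..N, ‖expSum c x s‖ ^ 2
  set B := ∫ s in 0..T, ‖expSum c x s‖ ^ 2
  set L : ℝ := (2 ^ (Fintype.card ι - 1) *
    (m + Fintype.card ι).choose (Fintype.card ι - 1)) ^ 2 * (m + 2 * Fintype.card ι)
  have hA : 0 ≤ A := intervalIntegral.integral_nonneg hN.le fun _ _ => by positivity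
  set C := 2 / (π * Fintype.card ι) * (1 / (4 * exp 1 * (T / N))) ^ (Fintype.card ι - 1)
  rw [← Real.sqrt_sq (by positivity : 0 ≤ C), ← Real.sqrt_mul (sq_nonneg _)]
  refine Real.sqrt_le_sqrt ?_
  calc C ^ 2 * (1 / T * B) ≤ C ^ 2 * (1 / T * (L * A)) := by gcongr
    _ = C ^ 2 * L * (1 / T * A) := by ring
    _ ≤ T / N * (1 / T * A) := by
        gcongr
        simpa only [L, mul_assoc] using hconst
    _ = 1 / N * A := by field_simp

end ExpSum

theorem turan_corollary_general (ℓ : ℕ) (hl : 1 ≤ ℓ) (Δ : ℝ) (hΔ : 0 < Δ)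
    (x : Fin ℓ → ℝ)
    (N : ℕ) (hN0 : 0 < N) (hN : (N : ℝ) ≤ 4 * Real.pi / Δ)
    (c : Fin ℓ → ℂ) :
    Real.sqrt ((1 / (N : ℝ)) *
        ∫ t in (0:ℝ)..(N : ℝ), ‖∑ j, c j * Complex.exp (Complex.I * t * x j)‖ ^ 2)
      ≥ (2 / (Real.pi * ℓ)) * ((N * Δ) / (16 * Real.pi * Real.exp 1)) ^ (ℓ - 1) *
        Real.sqrt ((Δ / (4 * Real.pi)) *
          ∫ t in (0:ℝ)..(4 * Real.pi / Δ),
            ‖∑ j, c j * Complex.exp (Complex.I * t * x j)‖ ^ 2) := by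
  have : Nonempty (Fin ℓ) := ⟨⟨0, hl⟩⟩
  have h := sqrt_integral_norm_expSum_sq_ge c x (by exact_mod_cast hN0) hN
  rw [Fintype.card_fin] at h
  have hq : N * Δ / (16 * π * exp 1) = 1 / (4 * exp 1 * (4 * π / Δ / N)) := by
    field_simp
    ring
  have hΔ' : Δ / (4 * π) = 1 / (4 * π / Δ) := by field_simp
  rw [ge_iff_le, hq, hΔ']
  exact h

/-- Corollary of Turán's inequality: for a single `(Δ, ℓ, τ)`-cluster of nodes and
`N ≤ 4π/Δ`, the normalized `L²` norm of the exponential sum on `[0, N]` is at least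
`(2/(πℓ)) (NΔ/(16πe))^{ℓ-1}` times its normalized `L²` norm on `[0, 4π/Δ]`. -/
theorem turan_corollary (ℓ : ℕ) (hl : 1 ≤ ℓ) (Δ τ : ℝ) (hΔ : 0 < Δ)
    (hτ1 : (ℓ : ℝ) - 1 ≤ τ) (hτ2 : τ ≤ Real.pi / Δ)
    (x : Fin ℓ → ℝ) (hmem : ∀ j, x j ∈ Set.Ioc (-Real.pi) Real.pi)
    (hsep : ∀ j k, j ≠ k →
      Δ ≤ wdist (x j) (x k) ∧ wdist (x j) (x k) ≤ τ * Δ)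
    (N : ℕ) (hN0 : 0 < N) (hN : (N : ℝ) ≤ 4 * Real.pi / Δ)
    (c : Fin ℓ → ℂ) :
    Real.sqrt ((1 / (N : ℝ)) *
        ∫ t in (0:ℝ)..(N : ℝ), ‖∑ j, c j * Complex.exp (Complex.I * t * x j)‖ ^ 2)
      ≥ (2 / (Real.pi * ℓ)) * ((N * Δ) / (16 * Real.pi * Real.exp 1)) ^ (ℓ - 1) *
        Real.sqrt ((Δ / (4 * Real.pi)) *
          ∫ t in (0:ℝ)..(4 * Real.pi / Δ),
            ‖∑ j, c j * Complex.exp (Complex.I * t * x j)‖ ^ 2) :=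
  turan_corollary_general ℓ hl Δ hΔ x N hN0 hN c
end

section
/- There exists an absolute constant C > 0 such that: for any points x_1,…,x_ℓ ∈ (−π,π] with pairwise wrap-around distances at least Δ, and any c ∈ ℂ^ℓ, the exponential sum P(t) = Σ c_j e^{i t x_j} satisfies (Δ/(4π)) ∫_0^{4π/Δ} |P(t)|² dt ≥ C · Σ_j |c_j|² (Salem-type inequality). -/
/-!
Integrate `|P|²` against the weight `1 - cos (Δ t / 2)`, which is at most `2` and vanishes to
second order at both ends of `[0, 4π/Δ]`. Expanding the square turns the weighted integral into
the quadratic form `∑ c_j c̄_k K(x_j - x_k)` of the kernel `K(ξ) = ∫ (1 - cos (Δ t / 2)) e^{itξ} dt`,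
for which `K(0) = 4π/Δ` and `|K(ξ)| ≤ 2Δ/(3ξ²)` when `|ξ| ≥ Δ`. Separated nodes satisfy
`∑_{k ≠ j} (x_j - x_k)⁻² ≤ 4/Δ²` (compare with `2 ∑ (nΔ)⁻²`), so Schur's test bounds the
off-diagonal part of the form by `8/(3Δ) ∑ |c_j|²`. Hence `(4π/Δ - 8/(3Δ)) ∑ |c_j|² ≤ 2 ∫ |P|²`,
which is the claim with `C = 1/2 - 1/(3π)`.
-/

open Complex Finset

open scoped Real ComplexConjugate

theorem Real.Angle.abs_toReal_coe_le_abs (θ : ℝ) : |(θ : Real.Angle).toReal| ≤ |θ| := by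
  rcases le_total |θ| π with h | h
  · rcases abs_choice θ with hθ | hθ <;> rw [hθ] at h ⊢
    · exact (abs_toReal_coe_eq_self_iff.2 ⟨hθ ▸ abs_nonneg θ, h⟩).le
    · rw [← abs_toReal_neg, ← coe_neg]
      exact (abs_toReal_coe_eq_self_iff.2 ⟨hθ ▸ abs_nonneg θ, h⟩).le
  · exact (abs_toReal_le_pi _).trans h

theorem wdist_eq_abs_toReal (u v : ℝ) : wdist u v = |((u - v : ℝ) : Real.Angle).toReal| := by
  rw [wdist, arg_exp, Real.Angle.toReal_coe]
  simp

theorem wdist_le_abs_sub (u v : ℝ) : wdist u v ≤ |u - v| := by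
  rw [wdist_eq_abs_toReal]
  exact Real.Angle.abs_toReal_coe_le_abs _

theorem sum_one_div_nat_sq_le_two (F : Finset ℕ) : ∑ m ∈ F, 1 / (m : ℝ) ^ 2 ≤ 2 := by
  have hsum : Summable (fun n : ℕ => 1 / (n : ℝ) ^ 2) :=
    Real.summable_one_div_nat_pow.mpr one_lt_two
  calc ∑ m ∈ F, 1 / (m : ℝ) ^ 2 ≤ ∑' n : ℕ, 1 / (n : ℝ) ^ 2 :=
        hsum.sum_le_tsum F fun n _ => by positivity
    _ = π ^ 2 / 6 := hasSum_zeta_two.tsum_eq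
    _ ≤ 2 := by nlinarith [Real.pi_lt_d2, Real.pi_pos]

section Separated

variable {ι : Type*} {s : Finset ι} {b : ι → ℝ} {Δ : ℝ}

/-- Rounding `b k / Δ` down is injective on `s`, which compares the sum with `Δ⁻² ∑ 1 / n²`. -/
theorem sum_one_div_sq_le_of_separated (hΔ : 0 < Δ) (hb : ∀ k ∈ s, Δ ≤ b k)
    (hsep : ∀ k ∈ s, ∀ k' ∈ s, k ≠ k' → Δ ≤ |b k - b k'|) :
    ∑ k ∈ s, 1 / b k ^ 2 ≤ 2 / Δ ^ 2 := by
  set n : ι → ℕ := fun k => ⌊b k / Δ⌋₊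
  have hn_le : ∀ k ∈ s, Δ * n k ≤ b k := fun k hk => by
    have := Nat.floor_le (div_nonneg (hΔ.le.trans (hb k hk)) hΔ.le)
    rwa [le_div_iff₀ hΔ, mul_comm] at this
  have hlt_n : ∀ k, b k < Δ * (n k + 1) := fun k => by
    have := Nat.lt_floor_add_one (b k / Δ)
    rwa [div_lt_iff₀ hΔ, mul_comm] at this
  have hn_pos : ∀ k ∈ s, 0 < Δ * n k := fun k hk => by
    have : 1 ≤ n k := (Nat.one_le_floor_iff _).2 ((one_le_div hΔ).2 (hb k hk))
    have : (1 : ℝ) ≤ n k := by exact_mod_cast this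
    positivity
  have hinj : Set.InjOn n s := fun k hk k' hk' hkk' => by
    by_contra hne
    have h₁ := hn_le k hk
    have h₂ := hlt_n k
    rw [hkk'] at h₁ h₂
    have := hn_le k' hk'
    have := hlt_n k'
    exact (hsep k hk k' hk' hne).not_gt (abs_sub_lt_iff.2 ⟨by linarith, by linarith⟩)
  calc ∑ k ∈ s, 1 / b k ^ 2 ≤ ∑ k ∈ s, 1 / Δ ^ 2 * (1 / (n k : ℝ) ^ 2) :=
        sum_le_sum fun k hk => by
          rw [one_div_mul_one_div, ← mul_pow]
          exact one_div_le_one_div_of_le (by have := hn_pos k hk; positivity)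
            (pow_le_pow_left₀ (hn_pos k hk).le (hn_le k hk) 2)
    _ = 1 / Δ ^ 2 * ∑ m ∈ s.image n, 1 / (m : ℝ) ^ 2 := by
        rw [← mul_sum, sum_image hinj]
    _ ≤ 1 / Δ ^ 2 * 2 := by gcongr; exact sum_one_div_nat_sq_le_two _
    _ = 2 / Δ ^ 2 := by ring

theorem sum_one_div_sq_le_of_abs_separated (hΔ : 0 < Δ) (hb : ∀ k ∈ s, Δ ≤ |b k|)
    (hsep : ∀ k ∈ s, ∀ k' ∈ s, k ≠ k' → Δ ≤ |b k - b k'|) :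
    ∑ k ∈ s, 1 / b k ^ 2 ≤ 4 / Δ ^ 2 := by
  rw [← sum_filter_add_sum_filter_not s (fun k => 0 < b k)]
  have hpos : ∑ k ∈ s with 0 < b k, 1 / b k ^ 2 ≤ 2 / Δ ^ 2 := by
    refine sum_one_div_sq_le_of_separated hΔ (fun k hk => ?_) (fun k hk k' hk' => ?_)
    · rw [mem_filter] at hk
      simpa [abs_of_pos hk.2] using hb k hk.1
    · exact hsep k (mem_filter.1 hk).1 k' (mem_filter.1 hk').1
  have hneg : ∑ k ∈ s with ¬0 < b k, 1 / (-b k) ^ 2 ≤ 2 / Δ ^ 2 := by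
    refine sum_one_div_sq_le_of_separated hΔ (fun k hk => ?_) (fun k hk k' hk' hkk' => ?_)
    · rw [mem_filter, not_lt] at hk
      simpa [abs_of_nonpos hk.2] using hb k hk.1
    · rw [neg_sub_neg, abs_sub_comm]
      exact hsep k (mem_filter.1 hk).1 k' (mem_filter.1 hk').1 hkk'
  simp only [neg_sq] at hneg
  linarith [show 2 / Δ ^ 2 + 2 / Δ ^ 2 = 4 / Δ ^ 2 by ring]

end Separated

/-- Representing `x k - x j` by its angle in `(-π, π]` turns circle separation into separation
on the line without increasing distances to `0`. -/
theorem sum_one_div_sq_sub_le_of_wdist_separated {ι : Type*} [Fintype ι] [DecidableEq ι]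
    {Δ : ℝ} (hΔ : 0 < Δ) (x : ι → ℝ) (hsep : ∀ j k, j ≠ k → Δ ≤ wdist (x j) (x k)) (j : ι) :
    ∑ k ∈ univ.erase j, 1 / (x j - x k) ^ 2 ≤ 4 / Δ ^ 2 := by
  set a : ι → ℝ := fun k => ((x k - x j : ℝ) : Real.Angle).toReal
  have ha_eq : ∀ k, wdist (x k) (x j) = |a k| := fun k => wdist_eq_abs_toReal _ _
  have ha_wdist : ∀ k k', wdist (a k) (a k') = wdist (x k) (x k') := fun k k' => by
    simp only [wdist_eq_abs_toReal, a, Real.Angle.coe_sub, Real.Angle.coe_toReal]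
    abel_nf
  have ha_ge : ∀ k ∈ univ.erase j, Δ ≤ |a k| := fun k hk =>
    ha_eq k ▸ hsep k j (ne_of_mem_erase hk)
  calc ∑ k ∈ univ.erase j, 1 / (x j - x k) ^ 2 ≤ ∑ k ∈ univ.erase j, 1 / a k ^ 2 :=
        sum_le_sum fun k hk => one_div_le_one_div_of_le
          (by rw [← sq_abs]; exact pow_pos (hΔ.trans_le (ha_ge k hk)) 2)
          (sq_le_sq.2 (by rw [← ha_eq, abs_sub_comm]; exact wdist_le_abs_sub _ _))
    _ ≤ 4 / Δ ^ 2 := sum_one_div_sq_le_of_abs_separated hΔ ha_ge fun k _ k' _ hkk' =>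
        (ha_wdist k k' ▸ hsep k k' hkk').trans (wdist_le_abs_sub _ _)

/-- The kernel `K` of the sketch above, with `ω = Δ / 2`. -/
noncomputable def salemKernel (ω ξ : ℝ) : ℂ :=
  ∫ t in (0 : ℝ)..2 * π / ω, ((1 - Real.cos (ω * t) : ℝ) : ℂ) * exp (I * t * ξ)

section SalemKernel

variable {ω ξ : ℝ}

theorem integral_exp_I_mul_of_ne_zero (T : ℝ) {ν : ℝ} (hν : ν ≠ 0) :
    ∫ t in (0 : ℝ)..T, exp (I * ν * t) = (exp (I * ν * T) - 1) / (I * ν) := by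
  rw [integral_exp_mul_complex (by simp [hν])]
  simp

theorem exp_I_mul_add_mul_two_pi_div (hω : ω ≠ 0) (ξ : ℝ) (n : ℤ) :
    exp (I * ↑(ξ + n * ω) * ↑(2 * π / ω)) = exp (I * ξ * ↑(2 * π / ω)) := by
  rw [← (exp_periodic.int_mul n) (I * ξ * ↑(2 * π / ω))]
  have : (ω : ℂ) ≠ 0 := ofReal_ne_zero.2 hω
  congr 1
  push_cast
  field_simp

theorem salemKernel_eq_sub (ω ξ : ℝ) :
    salemKernel ω ξ = (∫ t in (0 : ℝ)..2 * π / ω, exp (I * ξ * t))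
      - (∫ t in (0 : ℝ)..2 * π / ω, exp (I * ↑(ξ + ω) * t)) / 2
      - (∫ t in (0 : ℝ)..2 * π / ω, exp (I * ↑(ξ - ω) * t)) / 2 := by
  have hint : ∀ ν : ℝ, IntervalIntegrable (fun t : ℝ => exp (I * ν * t)) MeasureTheory.volume
      0 (2 * π / ω) := fun ν => (by fun_prop : Continuous _).intervalIntegrable _ _
  rw [← intervalIntegral.integral_div, ← intervalIntegral.integral_div,
    ← intervalIntegral.integral_sub (hint ξ) ((hint _).div_const _),
    ← intervalIntegral.integral_sub (((hint ξ).sub ((hint _).div_const _))) ((hint _).div_const _)]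
  refine intervalIntegral.integral_congr fun t _ => ?_
  have hplus : exp (I * ↑(ξ + ω) * t) = exp (I * ξ * t) * exp (↑(ω * t) * I) := by
    rw [← exp_add]; push_cast; ring_nf
  have hminus : exp (I * ↑(ξ - ω) * t) = exp (I * ξ * t) * exp (-↑(ω * t) * I) := by
    rw [← exp_add]; push_cast; ring_nf
  rw [hplus, hminus, ofReal_sub, ofReal_one, ofReal_cos, Complex.cos]
  ring_nf

theorem salemKernel_zero (hω : ω ≠ 0) : salemKernel ω 0 = ↑(2 * π / ω) := by
  have hT := exp_I_mul_add_mul_two_pi_div hω 0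
  have h1 := hT 1
  have h2 := hT (-1)
  rw [salemKernel_eq_sub, integral_exp_I_mul_of_ne_zero (ν := 0 + ω) _ (by simpa using hω),
    integral_exp_I_mul_of_ne_zero (ν := 0 - ω) _ (by simpa using hω)]
  simp only [Int.cast_one, Int.cast_neg, one_mul, neg_mul, ← sub_eq_add_neg] at h1 h2
  rw [h1, h2]
  simp

theorem salemKernel_eq_of_sq_ne_sq (hω : ω ≠ 0) (hξ : ξ ≠ 0) (hξω : ξ ^ 2 ≠ ω ^ 2) :
    salemKernel ω ξ =
      I * (exp (I * ξ * ↑(2 * π / ω)) - 1) * ↑(ω ^ 2 / (ξ * (ξ ^ 2 - ω ^ 2))) := by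
  have hplus : ξ + ω ≠ 0 := fun h => hξω (by rw [eq_neg_of_add_eq_zero_left h, neg_sq])
  have hminus : ξ - ω ≠ 0 := fun h => hξω (by rw [sub_eq_zero.1 h])
  have h1 := exp_I_mul_add_mul_two_pi_div hω ξ 1
  have h2 := exp_I_mul_add_mul_two_pi_div hω ξ (-1)
  simp only [Int.cast_one, Int.cast_neg, one_mul, neg_mul, ← sub_eq_add_neg] at h1 h2
  rw [salemKernel_eq_sub, integral_exp_I_mul_of_ne_zero _ hξ,
    integral_exp_I_mul_of_ne_zero _ hplus, integral_exp_I_mul_of_ne_zero _ hminus, h1, h2]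
  have : (ξ : ℂ) ≠ 0 := ofReal_ne_zero.2 hξ
  have : (ξ : ℂ) + ω ≠ 0 := by exact_mod_cast hplus
  have : (ξ : ℂ) - ω ≠ 0 := by exact_mod_cast hminus
  have : (ξ : ℂ) ^ 2 - ω ^ 2 ≠ 0 := by exact_mod_cast sub_ne_zero.2 hξω
  push_cast
  field_simp
  ring_nf
  rw [I_sq]
  ring

theorem norm_salemKernel_le (hω : 0 < ω) (hξ : 2 * ω ≤ |ξ|) :
    ‖salemKernel ω ξ‖ ≤ 4 * ω / (3 * ξ ^ 2) := by
  have hξ0 : 0 < |ξ| := by linarith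
  have hgap : 0 < ξ ^ 2 - ω ^ 2 := by
    rw [← sq_abs ξ]; nlinarith
  have hexp : ‖exp (I * ξ * ↑(2 * π / ω)) - 1‖ ≤ 2 :=
    (norm_sub_le _ _).trans (by simp [norm_exp]; norm_num)
  rw [salemKernel_eq_of_sq_ne_sq hω.ne' (abs_pos.1 hξ0) (sub_pos.1 hgap).ne', norm_mul, norm_mul,
    norm_I, one_mul, norm_real, Real.norm_eq_abs, abs_div, abs_mul, abs_of_pos hgap, abs_sq]
  calc ‖exp (I * ξ * ↑(2 * π / ω)) - 1‖ * (ω ^ 2 / (|ξ| * (ξ ^ 2 - ω ^ 2)))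
      ≤ 2 * (ω ^ 2 / (|ξ| * (ξ ^ 2 - ω ^ 2))) := by gcongr
    _ ≤ 4 * ω / (3 * ξ ^ 2) := by
      rw [← sq_abs ξ] at hgap ⊢
      rw [mul_div_assoc', div_le_div_iff₀ (by positivity) (by positivity)]
      -- `2|ξ|(ξ² - ω²) - 3ω ξ² = |ξ| (2|ξ| + ω) (|ξ| - 2ω)`
      nlinarith [mul_nonneg (mul_nonneg hξ0.le (by positivity : 0 ≤ 2 * |ξ| + ω))
        (sub_nonneg.2 hξ)]

end SalemKernel

theorem ofReal_integral_mul_norm_sq_sum_exp {ι : Type*} [Fintype ι] {w : ℝ → ℝ}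
    (hw : Continuous w) (a b : ℝ) (c : ι → ℂ) (x : ι → ℝ) :
    ((∫ t in a..b, w t * ‖∑ j, c j * exp (I * t * x j)‖ ^ 2 : ℝ) : ℂ) =
      ∑ j, ∑ k, c j * conj (c k) * ∫ t in a..b, (w t : ℂ) * exp (I * t * ↑(x j - x k)) := by
  have hpt : ∀ t : ℝ, ((w t * ‖∑ j, c j * exp (I * t * x j)‖ ^ 2 : ℝ) : ℂ) =
      ∑ j, ∑ k, c j * conj (c k) * ((w t : ℂ) * exp (I * t * ↑(x j - x k))) := by
    intro t
    have hexp : ∀ j k, exp (I * t * x j) * conj (exp (I * t * x k)) =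
        exp (I * t * ↑(x j - x k)) := fun j k => by
      rw [← exp_conj, ← exp_add]
      simp only [map_mul, conj_I, conj_ofReal, ofReal_sub]
      ring_nf
    rw [ofReal_mul, ofReal_pow, ← mul_conj', map_sum, sum_mul_sum, mul_sum]
    refine sum_congr rfl fun j _ => (mul_sum _ _ _).trans (sum_congr rfl fun k _ => ?_)
    rw [← hexp, map_mul]
    ring
  have hint : ∀ j k, IntervalIntegrable
      (fun t : ℝ => (w t : ℂ) * exp (I * t * ↑(x j - x k))) MeasureTheory.volume a b :=
    fun j k => (by fun_prop : Continuous _).intervalIntegrable _ _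
  rw [← intervalIntegral.integral_ofReal, intervalIntegral.integral_congr fun t _ => hpt t,
    intervalIntegral.integral_finsetSum fun j _ => ?_]
  · refine sum_congr rfl fun j _ => ?_
    rw [intervalIntegral.integral_finsetSum fun k _ => (hint j k).const_mul _]
    exact sum_congr rfl fun k _ => intervalIntegral.integral_const_mul _ _
  · exact (by fun_prop : Continuous _).intervalIntegrable _ _

theorem le_re_sum_mul_conj_mul {ι : Type*} [Fintype ι] [DecidableEq ι]
    (c : ι → ℂ) {K : ι → ι → ℂ} {M : ι → ι → ℝ} {D ε : ℝ}
    (hdiag : ∀ j, K j j = D) (hoff : ∀ j k, j ≠ k → ‖K j k‖ ≤ M j k)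
    (hsymm : ∀ j k, M j k = M k j) (hrow : ∀ j, ∑ k ∈ univ.erase j, M j k ≤ ε) :
    (D - ε) * ∑ j, ‖c j‖ ^ 2 ≤ (∑ j, ∑ k, c j * conj (c k) * K j k).re := by
  have hterm : ∀ j, ∀ k ∈ univ.erase j,
      -((‖c j‖ ^ 2 * M j k + ‖c k‖ ^ 2 * M j k) / 2) ≤ (c j * conj (c k) * K j k).re := by
    intro j k hk
    have hM := hoff j k (ne_of_mem_erase hk).symm
    have hamgm : ‖c j‖ * ‖c k‖ ≤ (‖c j‖ ^ 2 + ‖c k‖ ^ 2) / 2 := by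
      nlinarith [sq_nonneg (‖c j‖ - ‖c k‖)]
    calc -((‖c j‖ ^ 2 * M j k + ‖c k‖ ^ 2 * M j k) / 2) ≤ -(‖c j‖ * ‖c k‖ * ‖K j k‖) := by
          have := mul_le_mul hamgm hM (norm_nonneg _) (by positivity)
          linarith
      _ = -‖c j * conj (c k) * K j k‖ := by simp only [norm_mul, RCLike.norm_conj]
      _ ≤ _ := neg_le_of_abs_le (abs_re_le_norm _)
  have hswap : ∑ j, ∑ k ∈ univ.erase j, (‖c j‖ ^ 2 * M j k + ‖c k‖ ^ 2 * M j k) / 2 =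
      ∑ j, ‖c j‖ ^ 2 * ∑ k ∈ univ.erase j, M j k := by
    have : ∑ j, ∑ k ∈ univ.erase j, ‖c k‖ ^ 2 * M j k =
        ∑ j, ∑ k ∈ univ.erase j, ‖c j‖ ^ 2 * M j k := by
      rw [sum_comm' (t' := univ) (s' := fun k => univ.erase k) (by simp [ne_comm])]
      simp only [hsymm]
    simp only [← sum_div, sum_add_distrib, this, mul_sum]
    ring
  have hsplit : (∑ j, ∑ k, c j * conj (c k) * K j k).re =
      ∑ j, (D * ‖c j‖ ^ 2 + ∑ k ∈ univ.erase j, (c j * conj (c k) * K j k).re) := by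
    simp only [re_sum]
    refine sum_congr rfl fun j _ => ?_
    rw [← add_sum_erase _ _ (mem_univ j), hdiag, mul_conj', ← ofReal_pow, ← ofReal_mul, ofReal_re,
      mul_comm]
  have hrows : ∑ j, ‖c j‖ ^ 2 * ∑ k ∈ univ.erase j, M j k ≤ ε * ∑ j, ‖c j‖ ^ 2 := by
    rw [mul_sum]
    exact sum_le_sum fun j _ => by
      rw [mul_comm ε]; exact mul_le_mul_of_nonneg_left (hrow j) (by positivity)
  have hoffs : -∑ j, ∑ k ∈ univ.erase j, (‖c j‖ ^ 2 * M j k + ‖c k‖ ^ 2 * M j k) / 2 ≤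
      ∑ j, ∑ k ∈ univ.erase j, (c j * conj (c k) * K j k).re := by
    simp only [← sum_neg_distrib]
    exact sum_le_sum fun j _ => sum_le_sum (hterm j)
  rw [hsplit, sum_add_distrib, ← mul_sum]
  linarith

theorem le_re_sum_mul_conj_mul_salemKernel {ι : Type*} [Fintype ι] [DecidableEq ι] {Δ : ℝ}
    (hΔ : 0 < Δ) (x : ι → ℝ) (hsep : ∀ j k, j ≠ k → Δ ≤ wdist (x j) (x k)) (c : ι → ℂ) :
    (2 * π / (Δ / 2) - 8 / (3 * Δ)) * ∑ j, ‖c j‖ ^ 2 ≤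
      (∑ j, ∑ k, c j * conj (c k) * salemKernel (Δ / 2) (x j - x k)).re := by
  refine le_re_sum_mul_conj_mul c (M := fun j k => 4 * (Δ / 2) / (3 * (x j - x k) ^ 2))
    (fun j => by rw [sub_self, salemKernel_zero (by positivity)])
    (fun j k hjk => norm_salemKernel_le (by positivity)
      (by linarith [hsep j k hjk, wdist_le_abs_sub (x j) (x k)]))
    (fun j k => by ring) (fun j => ?_)
  calc ∑ k ∈ univ.erase j, 4 * (Δ / 2) / (3 * (x j - x k) ^ 2)
      = 2 * Δ / 3 * ∑ k ∈ univ.erase j, 1 / (x j - x k) ^ 2 := by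
        rw [mul_sum]; exact sum_congr rfl fun k _ => by rw [mul_one_div, div_div]; ring
    _ ≤ 2 * Δ / 3 * (4 / Δ ^ 2) := by
        gcongr; exact sum_one_div_sq_sub_le_of_wdist_separated hΔ x hsep j
    _ = 8 / (3 * Δ) := by field_simp; ring

theorem integral_one_sub_cos_mul_le {f : ℝ → ℝ} (hf : Continuous f) (hf0 : ∀ t, 0 ≤ f t)
    {T : ℝ} (hT : 0 ≤ T) (ω : ℝ) :
    ∫ t in (0 : ℝ)..T, (1 - Real.cos (ω * t)) * f t ≤ 2 * ∫ t in (0 : ℝ)..T, f t := by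
  rw [← intervalIntegral.integral_const_mul]
  refine intervalIntegral.integral_mono_on hT ((by fun_prop : Continuous _).intervalIntegrable _ _)
    ((by fun_prop : Continuous _).intervalIntegrable _ _) fun t _ => ?_
  have := Real.neg_one_le_cos (ω * t)
  have := hf0 t
  nlinarith

/-- **Salem-type inequality**: there is an absolute constant `C > 0` such that for any nodes
`x_1, …, x_ℓ ∈ (−π, π]` with pairwise wrap-around distances at least `Δ` and any
coefficients `c`, the exponential sum `P(t) = ∑ c_j e^{i t x_j}` satisfies
`(Δ/(4π)) ∫_0^{4π/Δ} |P|² ≥ C ∑ |c_j|²`. -/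
theorem salem_inequality :
    ∃ C : ℝ, 0 < C ∧
      ∀ (ℓ : ℕ) (Δ : ℝ) (x : Fin ℓ → ℝ) (c : Fin ℓ → ℂ),
        0 < Δ →
        (∀ j, x j ∈ Set.Ioc (-Real.pi) Real.pi) →
        (∀ j k, j ≠ k → Δ ≤ wdist (x j) (x k)) →
        C * ∑ j, ‖c j‖ ^ 2 ≤
          (Δ / (4 * Real.pi)) *
            ∫ t in (0:ℝ)..(4 * Real.pi / Δ),
              ‖∑ j, c j * Complex.exp (Complex.I * t * x j)‖ ^ 2 := by
  refine ⟨1 / 2 - 1 / (3 * π), sub_pos.2 ?_, fun ℓ Δ x c hΔ _ hsep => ?_⟩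
  · rw [div_lt_div_iff₀ (by positivity) two_pos]
    linarith [Real.pi_gt_three]
  rw [show 4 * π / Δ = 2 * π / (Δ / 2) by field_simp; ring]
  have hweight := integral_one_sub_cos_mul_le (f := fun t => ‖∑ j, c j * exp (I * t * x j)‖ ^ 2)
    (by fun_prop) (fun t => by positivity) (T := 2 * π / (Δ / 2)) (by positivity) (Δ / 2)
  have hform := congrArg re (ofReal_integral_mul_norm_sq_sum_exp
    (w := fun t => 1 - Real.cos (Δ / 2 * t)) (by fun_prop) 0 (2 * π / (Δ / 2)) c x)
  rw [ofReal_re] at hform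
  have hquad := le_re_sum_mul_conj_mul_salemKernel hΔ x hsep c
  calc (1 / 2 - 1 / (3 * π)) * ∑ j, ‖c j‖ ^ 2
      = Δ / (4 * π) * ((2 * π / (Δ / 2) - 8 / (3 * Δ)) * (∑ j, ‖c j‖ ^ 2) / 2) := by
        field_simp; ring
    _ ≤ _ := by gcongr; linarith [hquad.trans_eq hform.symm]
end

section
/- Let T: [0,1] → ℝ be a nonnegative exponential sum of degree at most w with real frequencies bounded by τNΔ ≤ 2π in absolute value, where N ≥ 1 is an integer. Then |∫_0^1 T(u) du − (1/N) Σ_{k=0}^N T(k/N)| ≤ (C ℓ^5 / N) ‖T‖_{L∞[0,1]} for w = ℓ²−ℓ+1 and an absolute constant C (Riemann sum approximation via Bernstein's inequality). -/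
/-!
The left-endpoint rule on the `N` cells of `[0, 1]` errs by at most `(1 / N) ∫₀¹ |T'|`, and the
extra endpoint term `T 1 / N` by at most `‖T‖ / N`. To bound the total variation, cut `[0, 1]`
into `8w` intervals of length `1 / (8w)`. The sum `T` solves `∏ⱼ (D² + λⱼ²) y = 0`, an equation
of order `2w`; as all `|λⱼ| ≤ 2π`, de la Vallée Poussin's argument shows that on such a short
interval `T'` either vanishes identically or has fewer than `2w` zeros. In the latter case `T` is
monotone on at most `2w` pieces, each contributing at most `‖T‖` because `0 ≤ T ≤ ‖T‖`. Hence
`∫₀¹ |T'| ≤ 16 w² ‖T‖ ≤ 16 ℓ⁴ ‖T‖`.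
-/

open Set MeasureTheory intervalIntegral
open scoped Interval

theorem IsPreconnected.forall_pos_or_forall_neg {s : Set ℝ} (hs : IsPreconnected s) {g : ℝ → ℝ}
    (hg : ContinuousOn g s) (hne : ∀ x ∈ s, g x ≠ 0) :
    (∀ x ∈ s, 0 < g x) ∨ ∀ x ∈ s, g x < 0 := by
  by_contra! h
  obtain ⟨⟨x, hx, hgx⟩, ⟨y, hy, hgy⟩⟩ := h
  obtain ⟨z, hz, hgz⟩ := hs.intermediate_value hx hy hg ⟨hgx, hgy⟩
  exact hne z hz hgz

theorem integral_abs_eq_abs_integral_of_ne_zero {g : ℝ → ℝ} {α β : ℝ} (hαβ : α ≤ β)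
    (hg : ContinuousOn g (Ioo α β)) (hne : ∀ x ∈ Ioo α β, g x ≠ 0) :
    ∫ x in α..β, |g x| = |∫ x in α..β, g x| := by
  have hnonneg : 0 ≤ ∫ x in α..β, |g x| := integral_nonneg hαβ fun _ _ => abs_nonneg _
  rcases isPreconnected_Ioo.forall_pos_or_forall_neg hg hne with hpos | hneg
  · have h : ∫ x in α..β, |g x| = ∫ x in α..β, g x :=
      integral_congr_Ioo_of_le hαβ fun x hx => abs_of_pos (hpos x hx)
    rw [← h, abs_of_nonneg hnonneg]
  · have h : ∫ x in α..β, |g x| = -∫ x in α..β, g x := by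
      rw [← intervalIntegral.integral_neg]
      exact integral_congr_Ioo_of_le hαβ fun x hx => abs_of_neg (hneg x hx)
    rw [abs_of_nonpos (by linarith), h]

section Deriv

variable {f f' : ℝ → ℝ}

theorem integral_abs_deriv_le_of_forall_ne_zero (hf : ∀ x, HasDerivAt f (f' x) x)
    (hf' : Continuous f') {α β S : ℝ} (hαβ : α ≤ β)
    (hosc : ∀ x ∈ Icc α β, ∀ y ∈ Icc α β, |f y - f x| ≤ S) (hne : ∀ x ∈ Ioo α β, f' x ≠ 0) :
    ∫ x in α..β, |f' x| ≤ S := by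
  rw [integral_abs_eq_abs_integral_of_ne_zero hαβ hf'.continuousOn hne,
    integral_eq_sub_of_hasDerivAt (fun x _ => hf x) (hf'.intervalIntegrable _ _)]
  exact hosc α (left_mem_Icc.2 hαβ) β (right_mem_Icc.2 hαβ)

/-- Between consecutive zeros of `f'` the function `f` is monotone, so each of the at most
`d + 1` pieces contributes at most the oscillation `S`. -/
theorem integral_abs_deriv_le_of_encard_zeros_le (hf : ∀ x, HasDerivAt f (f' x) x)
    (hf' : Continuous f') {S : ℝ} (d : ℕ) {α β : ℝ} (hαβ : α ≤ β)
    (hosc : ∀ x ∈ Icc α β, ∀ y ∈ Icc α β, |f y - f x| ≤ S)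
    (hd : {x ∈ Ioo α β | f' x = 0}.encard ≤ d) :
    ∫ x in α..β, |f' x| ≤ (d + 1) * S := by
  have hS : 0 ≤ S := (abs_nonneg _).trans (hosc α (left_mem_Icc.2 hαβ) α (left_mem_Icc.2 hαβ))
  induction d generalizing α with
  | zero =>
    have hZ : {x ∈ Ioo α β | f' x = 0} = ∅ := by simpa using hd
    simpa using integral_abs_deriv_le_of_forall_ne_zero hf hf' hαβ hosc
      fun x hx hx0 => hZ.subset ⟨hx, hx0⟩
  | succ d ih =>
    set Z := {x ∈ Ioo α β | f' x = 0}
    rcases Z.eq_empty_or_nonempty with hZ | hZ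
    · have := integral_abs_deriv_le_of_forall_ne_zero hf hf' hαβ hosc
        fun x hx hx0 => hZ.subset ⟨hx, hx0⟩
      have : (0 : ℝ) ≤ d + 1 := by positivity
      push_cast
      nlinarith
    obtain ⟨z, ⟨⟨hαz, hzβ⟩, hz0⟩, hzmin⟩ :=
      Z.exists_min_image id (Set.finite_of_encard_le_coe hd) hZ
    have hleft : ∫ x in α..z, |f' x| ≤ S :=
      integral_abs_deriv_le_of_forall_ne_zero hf hf' hαz.le
        (fun x hx y hy => hosc x ⟨hx.1, hx.2.trans hzβ.le⟩ y ⟨hy.1, hy.2.trans hzβ.le⟩)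
        fun x hx hx0 => (hzmin x ⟨⟨hx.1, hx.2.trans hzβ⟩, hx0⟩).not_gt hx.2
    have hZright : {x ∈ Ioo z β | f' x = 0} ⊆ Z \ {z} := fun x ⟨hx, hx0⟩ =>
      ⟨⟨⟨hαz.trans hx.1, hx.2⟩, hx0⟩, hx.1.ne'⟩
    have hright : ∫ x in z..β, |f' x| ≤ (d + 1) * S := by
      refine ih hzβ.le (fun x hx y hy => hosc x ⟨hαz.le.trans hx.1, hx.2⟩ y
        ⟨hαz.le.trans hy.1, hy.2⟩) ?_
      have := Set.encard_sdiff_singleton_add_one (s := Z) ⟨⟨hαz, hzβ⟩, hz0⟩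
      have := (Set.encard_le_encard hZright).trans
        ((ENat.add_le_add_iff_right ENat.one_ne_top).1 (this.le.trans (by simpa using hd)))
      exact_mod_cast this
    rw [← integral_add_adjacent_intervals (hf'.abs.intervalIntegrable α z)
      (hf'.abs.intervalIntegrable z β)]
    push_cast
    linarith

end Deriv

theorem exists_strictMono_fin_of_le_encard {α : Type*} [LinearOrder α] {s : Set α} {n : ℕ}
    (h : (n : ℕ∞) ≤ s.encard) : ∃ zs : Fin n → α, StrictMono zs ∧ ∀ i, zs i ∈ s := by
  obtain ⟨t, hts, htn⟩ := Set.exists_subset_encard_eq h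
  have ht : t.Finite := Set.finite_of_encard_eq_coe htn
  have hcard : ht.toFinset.card = n := by
    simpa [ht.encard_eq_coe_toFinset_card] using htn
  refine ⟨fun i => ht.toFinset.orderEmbOfFin hcard i, (ht.toFinset.orderEmbOfFin hcard).strictMono,
    fun i => hts ?_⟩
  exact ht.mem_toFinset.1 (ht.toFinset.orderEmbOfFin_mem hcard i)

section Rolle

variable {s : Set ℝ} {g : ℕ → ℝ → ℝ}

theorem exists_strictMono_zeros_deriv {f f' : ℝ → ℝ} (hs : s.OrdConnected)
    (hf : ∀ x, HasDerivAt f (f' x) x) {n : ℕ} (zs : Fin (n + 1) → ℝ) (hzs : StrictMono zs)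
    (hmem : ∀ i, zs i ∈ s) (hzero : ∀ i, f (zs i) = 0) :
    ∃ zs' : Fin n → ℝ, StrictMono zs' ∧ (∀ i, zs' i ∈ s) ∧ ∀ i, f' (zs' i) = 0 := by
  have hcont : Continuous f := continuous_iff_continuousAt.2 fun x => (hf x).continuousAt
  choose zs' hzs' hzero' using fun i : Fin n =>
    exists_hasDerivAt_eq_zero (hzs i.castSucc_lt_succ) hcont.continuousOn
      ((hzero _).trans (hzero _).symm) fun x _ => hf x
  refine ⟨zs', fun i j hij => ?_, fun i => hs.out (hmem _) (hmem _) (Ioo_subset_Icc_self (hzs' i)),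
    hzero'⟩
  calc zs' i < zs i.succ := (hzs' i).2
    _ ≤ zs j.castSucc := hzs.monotone (Fin.succ_le_castSucc_iff.2 hij)
    _ < zs' j := (hzs' j).1

theorem exists_strictMono_zeros_iterate (hs : s.OrdConnected)
    (hg : ∀ k x, HasDerivAt (g k) (g (k + 1) x) x) (k : ℕ) {n : ℕ} (zs : Fin (n + k) → ℝ)
    (hzs : StrictMono zs) (hmem : ∀ i, zs i ∈ s) (hzero : ∀ i, g 0 (zs i) = 0) :
    ∃ zs' : Fin n → ℝ, StrictMono zs' ∧ (∀ i, zs' i ∈ s) ∧ ∀ i, g k (zs' i) = 0 := by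
  induction k generalizing g with
  | zero => exact ⟨zs, hzs, hmem, hzero⟩
  | succ k ih =>
    obtain ⟨zs', hzs', hmem', hzero'⟩ := exists_strictMono_zeros_deriv hs (hg 0) zs hzs hmem hzero
    exact ih (g := fun j => g (j + 1)) (fun j => hg (j + 1)) zs' hzs' hmem' hzero'

theorem exists_zero_iterate_of_strictMono (hs : s.OrdConnected)
    (hg : ∀ k x, HasDerivAt (g k) (g (k + 1) x) x) {n : ℕ} (zs : Fin n → ℝ)
    (hzs : StrictMono zs) (hmem : ∀ i, zs i ∈ s) (hzero : ∀ i, g 0 (zs i) = 0) {k : ℕ}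
    (hk : k < n) : ∃ z ∈ s, g k z = 0 := by
  obtain ⟨zs', -, hmem', hzero'⟩ := exists_strictMono_zeros_iterate hs hg k
    (zs ∘ Fin.castLE (by omega : 1 + k ≤ n)) (hzs.comp (Fin.strictMono_castLE _))
    (fun i => hmem _) fun i => hzero _
  exact ⟨zs' 0, hmem' 0, hzero' 0⟩

end Rolle

theorem abs_le_mul_of_eq_zero_of_abs_deriv_le {f f' : ℝ → ℝ} {α β M z x : ℝ}
    (hf : ∀ x, HasDerivAt f (f' x) x) (hM : ∀ y ∈ Icc α β, |f' y| ≤ M) (hz : z ∈ Icc α β)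
    (hfz : f z = 0) (hx : x ∈ Icc α β) : |f x| ≤ M * (β - α) := by
  have h := Convex.norm_image_sub_le_of_norm_hasDerivWithin_le
    (fun y _ => (hf y).hasDerivWithinAt) hM (convex_Icc α β) hz hx
  simp only [Real.norm_eq_abs, hfz, sub_zero] at h
  have hM0 : 0 ≤ M := (abs_nonneg _).trans (hM z hz)
  refine h.trans (mul_le_mul_of_nonneg_left ?_ hM0)
  rw [abs_sub_le_iff]
  constructor <;> linarith [hx.1, hx.2, hz.1, hz.2]

theorem integral_zero_one_eq_sum_range {F : ℝ → ℝ} (hF : IntervalIntegrable F volume 0 1)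
    {n : ℕ} (hn : n ≠ 0) :
    ∫ x in (0 : ℝ)..1, F x = ∑ k ∈ Finset.range n, ∫ x in (k / n : ℝ)..((k + 1) / n), F x := by
  have hn' : (0 : ℝ) < n := by positivity
  have hmem : ∀ k ≤ n, (k / n : ℝ) ∈ uIcc 0 1 := fun k hk => by
    rw [uIcc_of_le zero_le_one]
    exact ⟨by positivity, div_le_one_of_le₀ (by exact_mod_cast hk) hn'.le⟩
  have h := sum_integral_adjacent_intervals (a := fun k : ℕ => (k / n : ℝ)) (n := n)
    fun k hk => hF.mono_set (uIcc_subset_uIcc (hmem k hk.le) (hmem (k + 1) hk))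
  simp only [Nat.cast_zero, zero_div, Nat.cast_add, Nat.cast_one, div_self hn'.ne'] at h
  exact h.symm

section Riemann

variable {f f' : ℝ → ℝ}

theorem abs_integral_sub_mul_left_le (hf : ∀ x, HasDerivAt f (f' x) x) (hf' : Continuous f')
    {a b : ℝ} (hab : a ≤ b) :
    |(∫ u in a..b, f u) - (b - a) * f a| ≤ (b - a) * ∫ u in a..b, |f' u| := by
  have hcont : Continuous f := continuous_iff_continuousAt.2 fun x => (hf x).continuousAt
  have hpt : ∀ u ∈ Ι a b, ‖f u - f a‖ ≤ ∫ x in a..b, |f' x| := fun u hu => by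
    rw [uIoc_of_le hab] at hu
    rw [Real.norm_eq_abs, ← integral_eq_sub_of_hasDerivAt (fun x _ => hf x)
      (hf'.intervalIntegrable _ _)]
    calc |∫ x in a..u, f' x| ≤ ∫ x in a..u, |f' x| := abs_integral_le_integral_abs hu.1.le
      _ ≤ ∫ x in a..b, |f' x| :=
        integral_mono_interval le_rfl hu.1.le hu.2 (.of_forall fun _ => abs_nonneg _)
          (hf'.abs.intervalIntegrable _ _)
  have h := norm_integral_le_of_norm_le_const hpt
  rw [integral_sub (hcont.intervalIntegrable _ _) intervalIntegrable_const,
    intervalIntegral.integral_const, smul_eq_mul, Real.norm_eq_abs, abs_of_nonneg (sub_nonneg.2 hab)] at h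
  linarith

theorem abs_integral_sub_riemannSum_le (hf : ∀ x, HasDerivAt f (f' x) x) (hf' : Continuous f')
    {N : ℕ} (hN : N ≠ 0) :
    |(∫ u in (0 : ℝ)..1, f u) - (1 / N) * ∑ k ∈ Finset.range N, f (k / N)| ≤
      (1 / N) * ∫ u in (0 : ℝ)..1, |f' u| := by
  have hcont : Continuous f := continuous_iff_continuousAt.2 fun x => (hf x).continuousAt
  have hstep : ∀ k : ℕ, ((k + 1) / N - k / N : ℝ) = 1 / N := fun k => by ring
  rw [integral_zero_one_eq_sum_range (hcont.intervalIntegrable _ _) hN,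
    integral_zero_one_eq_sum_range (hf'.abs.intervalIntegrable _ _) hN, Finset.mul_sum,
    Finset.mul_sum, ← Finset.sum_sub_distrib]
  refine (Finset.abs_sum_le_sum_abs _ _).trans (Finset.sum_le_sum fun k _ => ?_)
  have h := abs_integral_sub_mul_left_le hf hf' (a := k / N) (b := (k + 1) / N)
    (by linarith [hstep k, show (0 : ℝ) ≤ 1 / N by positivity])
  rwa [hstep] at h

theorem abs_integral_sub_sum_range_succ_le (hf : ∀ x, HasDerivAt f (f' x) x)
    (hf' : Continuous f') {N : ℕ} (hN : N ≠ 0) :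
    |(∫ u in (0 : ℝ)..1, f u) - (1 / N) * ∑ k ∈ Finset.range (N + 1), f (k / N)| ≤
      (1 / N) * ((∫ u in (0 : ℝ)..1, |f' u|) + |f 1|) := by
  rw [Finset.sum_range_succ, div_self (Nat.cast_ne_zero.2 hN), mul_add, mul_add, ← sub_sub]
  refine (abs_sub _ _).trans (add_le_add (abs_integral_sub_riemannSum_le hf hf' hN) ?_)
  rw [abs_mul, abs_of_nonneg (by positivity)]

end Riemann

theorem two_mul_abs_le_sum_abs_of_sum_eq_zero {ι : Type*} {s : Finset ι} {a : ι → ℝ}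
    (h : ∑ j ∈ s, a j = 0) {i : ι} (hi : i ∈ s) : 2 * |a i| ≤ ∑ j ∈ s, |a j| := by
  classical
  rw [← Finset.add_sum_erase s a hi, add_eq_zero_iff_eq_neg] at h
  rw [← Finset.add_sum_erase s _ hi, two_mul, add_le_add_iff_left, h, abs_neg]
  exact Finset.abs_sum_le_sum_abs _ _

/-- De la Vallée Poussin's argument: since `g k` vanishes somewhere on `[α, β]` for `k < 2w`,
`sup |g k| ≤ (β - α) sup |g (k + 1)|`; feeding these bounds into the differential equation gives
`2 sup |g (2w)| ≤ P sup |g (2w)|` with `P < 2`. -/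
theorem eqOn_zero_of_sum_powerset_eq_zero {ι : Type*} [Fintype ι] {g : ℕ → ℝ → ℝ}
    (hg : ∀ k x, HasDerivAt (g k) (g (k + 1) x) x) (ω : ι → ℝ)
    (hode : ∀ x, ∑ s ∈ Finset.univ.powerset,
      (∏ r ∈ s, ω r ^ 2) * g (2 * (Fintype.card ι - s.card)) x = 0)
    {α β : ℝ} (hαβ : α ≤ β) (hsmall : ∏ r, (1 + ω r ^ 2 * (β - α) ^ 2) < 2)
    (hzeros : ∀ k < 2 * Fintype.card ι, ∃ z ∈ Icc α β, g k z = 0) :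
    EqOn (g 0) 0 (Icc α β) := by
  set w := Fintype.card ι
  set h := β - α
  have hcont : Continuous (g (2 * w)) :=
    continuous_iff_continuousAt.2 fun x => (hg _ x).continuousAt
  set A := sSup ((fun x => |g (2 * w) x|) '' Icc α β)
  have hA : ∀ x ∈ Icc α β, |g (2 * w) x| ≤ A := fun x hx =>
    hcont.abs.continuousOn.le_sSup_image_Icc hx
  have hA0 : 0 ≤ A := (abs_nonneg _).trans (hA α (left_mem_Icc.2 hαβ))
  have hchain : ∀ j ≤ 2 * w, ∀ x ∈ Icc α β, |g (2 * w - j) x| ≤ h ^ j * A := by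
    intro j
    induction j with
    | zero => simpa using hA
    | succ j ih =>
      intro hj x hx
      obtain ⟨z, hz, hgz⟩ := hzeros (2 * w - (j + 1)) (by omega)
      have hderiv : ∀ x, HasDerivAt (g (2 * w - (j + 1))) (g (2 * w - j) x) x := by
        rw [show 2 * w - j = 2 * w - (j + 1) + 1 by omega]
        exact hg _
      rw [pow_succ, mul_right_comm]
      exact abs_le_mul_of_eq_zero_of_abs_deriv_le hderiv (ih (by omega)) hz hgz hx
  have hP : ∑ s ∈ Finset.univ.powerset, (∏ r ∈ s, ω r ^ 2) * h ^ (2 * s.card) =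
      ∏ r, (1 + ω r ^ 2 * h ^ 2) := by
    rw [Finset.prod_one_add]
    refine Finset.sum_congr rfl fun s _ => ?_
    rw [Finset.prod_mul_distrib, Finset.prod_const, pow_mul]
  have h2A : A ≤ (∏ r, (1 + ω r ^ 2 * h ^ 2)) * A / 2 := by
    refine csSup_le ((nonempty_Icc.2 hαβ).image _) (forall_mem_image.2 fun x hx => ?_)
    have h2 := two_mul_abs_le_sum_abs_of_sum_eq_zero (hode x)
      (Finset.empty_mem_powerset Finset.univ)
    simp only [Finset.prod_empty, one_mul, Finset.card_empty, Nat.sub_zero] at h2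
    rw [le_div_iff₀ two_pos, mul_comm, ← hP, Finset.sum_mul]
    refine h2.trans (Finset.sum_le_sum fun s _ => ?_)
    have hc : 0 ≤ ∏ r ∈ s, ω r ^ 2 := Finset.prod_nonneg fun r _ => sq_nonneg (ω r)
    rw [abs_mul, abs_of_nonneg hc, mul_assoc]
    refine mul_le_mul_of_nonneg_left ?_ hc
    have hcard : s.card ≤ w := Finset.card_le_univ s
    rw [show 2 * (w - s.card) = 2 * w - 2 * s.card by omega]
    exact hchain _ (by omega) x hx
  have hA : A = 0 := by nlinarith
  intro x hx
  simpa [hA] using hchain (2 * w) le_rfl x hx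

theorem prod_one_add_sq_mul_sq_lt_two {ι : Type*} [Fintype ι] [Nonempty ι] {ω : ι → ℝ}
    (hω : ∀ j, |ω j| ≤ 2 * Real.pi) {h : ℝ} (h0 : 0 ≤ h)
    (hh : h ≤ 1 / (8 * Fintype.card ι)) :
    ∏ j, (1 + ω j ^ 2 * h ^ 2) < 2 := by
  have hw : (1 : ℝ) ≤ Fintype.card ι := by exact_mod_cast Fintype.card_pos
  have hwh : 8 * Fintype.card ι * h ≤ 1 := by
    rwa [le_div_iff₀ (by positivity), mul_comm] at hh
  have hsum : ∑ j, ω j ^ 2 * h ^ 2 ≤ Real.pi ^ 2 / 16 := by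
    have hsq : ∀ j, ω j ^ 2 ≤ (2 * Real.pi) ^ 2 := fun j => by
      simpa only [sq_abs] using pow_le_pow_left₀ (abs_nonneg _) (hω j) 2
    calc ∑ j, ω j ^ 2 * h ^ 2 ≤ ∑ _j : ι, (2 * Real.pi) ^ 2 * h ^ 2 :=
          Finset.sum_le_sum fun j _ => mul_le_mul_of_nonneg_right (hsq j) (sq_nonneg h)
      _ = 4 * Real.pi ^ 2 * (Fintype.card ι * h) * h := by
          rw [Finset.sum_const, Finset.card_univ, nsmul_eq_mul]; ring
      _ ≤ 4 * Real.pi ^ 2 * (1 / 8) * (1 / 8) := by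
          gcongr <;> nlinarith
      _ = Real.pi ^ 2 / 16 := by ring
  have hpi : Real.pi ^ 2 / 16 < 2 / 3 := by nlinarith [Real.pi_lt_d2, Real.pi_pos]
  calc ∏ j, (1 + ω j ^ 2 * h ^ 2)
      ≤ Real.exp (∑ j, ω j ^ 2 * h ^ 2) := Real.prod_one_add_le_exp_sum _ fun j => by positivity
    _ ≤ Real.exp (Real.pi ^ 2 / 16) := Real.exp_le_exp.2 hsum
    _ ≤ (2 + Real.pi ^ 2 / 16) / (2 - Real.pi ^ 2 / 16) :=
        Real.exp_le_two_add_div_two_sub (by positivity) (by linarith)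
    _ < 2 := by rw [div_lt_iff₀ (by linarith)]; linarith

section ExpSum

open Complex

variable {ι : Type*} [Fintype ι] (b : ι → ℂ) (ω : ι → ℝ)

noncomputable def expSumDeriv (k : ℕ) (u : ℝ) : ℂ :=
  ∑ j, b j * (I * ω j) ^ k * exp (I * u * ω j)

theorem hasDerivAt_expSumDeriv (k : ℕ) (u : ℝ) :
    HasDerivAt (expSumDeriv b ω k) (expSumDeriv b ω (k + 1) u) u := by
  refine HasDerivAt.fun_sum fun j _ => ?_
  have hlin : HasDerivAt (fun z : ℂ => I * z * ω j) (I * ω j) u := by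
    simpa using ((hasDerivAt_id (u : ℂ)).const_mul I).mul_const (ω j : ℂ)
  exact ((hlin.cexp.comp_ofReal).const_mul (b j * (I * ω j) ^ k)).congr_deriv (by ring)

theorem hasDerivAt_re_expSumDeriv (k : ℕ) (u : ℝ) :
    HasDerivAt (fun u => (expSumDeriv b ω k u).re) (expSumDeriv b ω (k + 1) u).re u :=
  reCLM.hasFDerivAt.comp_hasDerivAt u (hasDerivAt_expSumDeriv b ω k u)

theorem continuous_re_expSumDeriv (k : ℕ) : Continuous fun u => (expSumDeriv b ω k u).re :=
  continuous_iff_continuousAt.2 fun u => (hasDerivAt_re_expSumDeriv b ω k u).continuousAt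

/-- The differential equation `∏ r, (D ^ 2 + ω r ^ 2) y = 0`, expanded over subsets of the
factors: each `X = I * ω j` is a root of `∏ r, (X ^ 2 + ω r ^ 2)`. -/
theorem sum_powerset_expSumDeriv_eq_zero (q : ℕ) (u : ℝ) :
    ∑ s ∈ Finset.univ.powerset,
      (∏ r ∈ s, (ω r : ℂ) ^ 2) * expSumDeriv b ω (2 * (Fintype.card ι - s.card) + q) u = 0 := by
  classical
  have hroot : ∀ j, ∑ s ∈ Finset.univ.powerset,
      (∏ r ∈ s, (ω r : ℂ) ^ 2) * ((I * ω j) ^ 2) ^ (Fintype.card ι - s.card) = 0 := fun j => by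
    have h := Finset.prod_add (fun r => (ω r : ℂ) ^ 2) (fun _ => (I * ω j) ^ 2) Finset.univ
    rw [Finset.prod_eq_zero (Finset.mem_univ j) (by rw [mul_pow, I_sq]; ring)] at h
    rw [h]
    refine Finset.sum_congr rfl fun s _ => ?_
    rw [Finset.prod_const, Finset.card_univ_sdiff]
  simp only [expSumDeriv, Finset.mul_sum]
  rw [Finset.sum_comm]
  refine Finset.sum_eq_zero fun j _ => ?_
  rw [← mul_zero (b j * (I * ω j) ^ q * exp (I * u * ω j)), ← hroot j, Finset.mul_sum]
  refine Finset.sum_congr rfl fun s _ => ?_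
  rw [pow_add, pow_mul]
  ring

theorem sum_powerset_re_expSumDeriv_eq_zero (q : ℕ) (u : ℝ) :
    ∑ s ∈ Finset.univ.powerset,
      (∏ r ∈ s, ω r ^ 2) * (expSumDeriv b ω (2 * (Fintype.card ι - s.card) + q) u).re = 0 := by
  simpa [re_sum, ← ofReal_pow, ← ofReal_prod, re_ofReal_mul] using
    congrArg re (sum_powerset_expSumDeriv_eq_zero b ω q u)

end ExpSum

section ExpSumVariation

variable {ι : Type*} [Fintype ι] [Nonempty ι] {b : ι → ℂ} {ω : ι → ℝ}

/-- On an interval shorter than `1 / (8w)` the derivative either has fewer than `2w` zeros or, by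
de la Vallée Poussin's argument, vanishes identically. -/
theorem integral_abs_re_expSumDeriv_one_le (hω : ∀ j, |ω j| ≤ 2 * Real.pi) {α β S : ℝ}
    (hαβ : α ≤ β) (hlen : β - α ≤ 1 / (8 * Fintype.card ι))
    (hosc : ∀ x ∈ Icc α β, ∀ y ∈ Icc α β,
      |(expSumDeriv b ω 0 y).re - (expSumDeriv b ω 0 x).re| ≤ S) :
    ∫ x in α..β, |(expSumDeriv b ω 1 x).re| ≤ 2 * Fintype.card ι * S := by
  have hS : 0 ≤ S := (abs_nonneg _).trans (hosc α (left_mem_Icc.2 hαβ) α (left_mem_Icc.2 hαβ))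
  by_cases hZ : ((2 * Fintype.card ι : ℕ) : ℕ∞) ≤
      {x ∈ Ioo α β | (expSumDeriv b ω 1 x).re = 0}.encard
  · obtain ⟨zs, hzs, hmem⟩ := exists_strictMono_fin_of_le_encard hZ
    have hg : ∀ k x, HasDerivAt (fun u => (expSumDeriv b ω (k + 1) u).re)
        (expSumDeriv b ω (k + 1 + 1) x).re x := fun k => hasDerivAt_re_expSumDeriv b ω (k + 1)
    have hvanish := eqOn_zero_of_sum_powerset_eq_zero hg ω
      (sum_powerset_re_expSumDeriv_eq_zero b ω 1) hαβ
      (prod_one_add_sq_mul_sq_lt_two hω (sub_nonneg.2 hαβ) hlen)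
      fun k hk => exists_zero_iterate_of_strictMono ordConnected_Icc hg zs hzs
        (fun i => Ioo_subset_Icc_self (hmem i).1) (fun i => (hmem i).2) hk
    have h0 : EqOn (fun x => |(expSumDeriv b ω 1 x).re|) 0 (uIcc α β) := fun x hx => by
      rw [uIcc_of_le hαβ] at hx
      simp [hvanish hx]
    rw [integral_congr h0]
    simpa using by positivity
  · have hw : 1 ≤ 2 * Fintype.card ι := by have := Fintype.card_pos (α := ι); omega
    have hd : {x ∈ Ioo α β | (expSumDeriv b ω 1 x).re = 0}.encard ≤
        ((2 * Fintype.card ι - 1 : ℕ) : ℕ∞) := by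
      rw [← ENat.lt_add_one_iff (ENat.natCast_ne_top _), ← Nat.cast_add_one, Nat.sub_add_cancel hw]
      exact not_le.1 hZ
    have h := integral_abs_deriv_le_of_encard_zeros_le (hasDerivAt_re_expSumDeriv b ω 0)
      (continuous_re_expSumDeriv b ω 1) _ hαβ hosc hd
    simpa [Nat.cast_sub hw] using h

theorem integral_abs_re_expSumDeriv_one_le_sq (hω : ∀ j, |ω j| ≤ 2 * Real.pi) {S : ℝ}
    (hosc : ∀ x ∈ Icc (0 : ℝ) 1, ∀ y ∈ Icc (0 : ℝ) 1,
      |(expSumDeriv b ω 0 y).re - (expSumDeriv b ω 0 x).re| ≤ S) :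
    ∫ x in (0 : ℝ)..1, |(expSumDeriv b ω 1 x).re| ≤ 16 * Fintype.card ι ^ 2 * S := by
  set n := 8 * Fintype.card ι
  have hn : n ≠ 0 := by simp only [n]; positivity
  rw [integral_zero_one_eq_sum_range ((continuous_re_expSumDeriv b ω 1).abs.intervalIntegrable _ _)
    hn]
  have hn' : (n : ℝ) = 8 * Fintype.card ι := by simp [n]
  calc ∑ k ∈ Finset.range n, ∫ x in (k / n : ℝ)..((k + 1) / n), |(expSumDeriv b ω 1 x).re|
      ≤ ∑ _k ∈ Finset.range n, 2 * Fintype.card ι * S := Finset.sum_le_sum fun k hk => ?_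
    _ = 16 * Fintype.card ι ^ 2 * S := by simp [hn']; ring
  have hkn : (k + 1 : ℝ) ≤ n := by exact_mod_cast Finset.mem_range.1 hk
  have hpos : (0 : ℝ) < n := by positivity
  have hsub : Icc (k / n : ℝ) ((k + 1) / n) ⊆ Icc 0 1 :=
    Icc_subset_Icc (by positivity) ((div_le_one hpos).2 hkn)
  refine integral_abs_re_expSumDeriv_one_le hω (by gcongr; linarith) ?_
    fun x hx y hy => hosc x (hsub hx) y (hsub hy)
  rw [← hn', ← sub_div, add_sub_cancel_left]

end ExpSumVariation

theorem sq_sub_add_one_le_pow_five {ℓ : ℕ} (hℓ : 1 ≤ ℓ) : (ℓ ^ 2 - ℓ + 1) ^ 2 ≤ ℓ ^ 5 := by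
  have h : ℓ ^ 2 - ℓ + 1 ≤ ℓ ^ 2 := by have := Nat.le_self_pow two_ne_zero ℓ; omega
  calc (ℓ ^ 2 - ℓ + 1) ^ 2 ≤ (ℓ ^ 2) ^ 2 := Nat.pow_le_pow_left h 2
    _ ≤ ℓ ^ 5 := by rw [← pow_mul]; exact Nat.pow_le_pow_right hℓ (by norm_num)

/-- Riemann-sum approximation for nonnegative exponential sums: there is an absolute
constant `C` such that if `T : ℝ → ℝ` is a nonnegative exponential sum of degree at most
`w = ℓ² − ℓ + 1` whose real frequencies are bounded by `τNΔ ≤ 2π` in absolute value, and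
`N ≥ 1` is an integer, then
`|∫_0^1 T − (1/N) ∑_{k=0}^N T(k/N)| ≤ (C ℓ^5 / N) ‖T‖_{L∞[0,1]}`. -/
theorem riemann_sum_approx :
    ∃ C : ℝ, 0 < C ∧
      ∀ (ℓ N : ℕ) (τ Δ : ℝ) (b : Fin (ℓ ^ 2 - ℓ + 1) → ℂ)
        (lam : Fin (ℓ ^ 2 - ℓ + 1) → ℝ) (T : ℝ → ℝ),
        1 ≤ ℓ → 1 ≤ N →
        (∀ i, |lam i| ≤ τ * N * Δ) → τ * N * Δ ≤ 2 * Real.pi →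
        (∀ u : ℝ, ((T u : ℝ) : ℂ) = ∑ i, b i * Complex.exp (Complex.I * u * lam i)) →
        (∀ u : ℝ, 0 ≤ T u) →
        |(∫ u in (0:ℝ)..1, T u) - (1 / (N : ℝ)) * ∑ k ∈ Finset.range (N + 1), T (k / N)| ≤
          C * (ℓ : ℝ) ^ 5 / N * sSup ((fun u : ℝ => |T u|) '' Set.Icc (0:ℝ) 1) := by
  refine ⟨17, by norm_num, fun ℓ N τ Δ b lam T hℓ hN hlam hτ hT hT0 => ?_⟩
  obtain rfl : T = fun u => (expSumDeriv b lam 0 u).re := funext fun u => by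
    simp only [expSumDeriv, pow_zero, mul_one, ← hT u, Complex.ofReal_re]
  set S := sSup ((fun u : ℝ => |(expSumDeriv b lam 0 u).re|) '' Icc (0 : ℝ) 1)
  have hS : ∀ x ∈ Icc (0 : ℝ) 1, |(expSumDeriv b lam 0 x).re| ≤ S := fun x hx =>
    (continuous_re_expSumDeriv b lam 0).abs.continuousOn.le_sSup_image_Icc hx
  have hTV := integral_abs_re_expSumDeriv_one_le_sq (fun i => (hlam i).trans hτ)
    fun x hx y hy => abs_sub_le_of_nonneg_of_le (hT0 y) ((le_abs_self _).trans (hS y hy))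
      (hT0 x) ((le_abs_self _).trans (hS x hx))
  have hR := abs_integral_sub_sum_range_succ_le (hasDerivAt_re_expSumDeriv b lam 0)
    (continuous_re_expSumDeriv b lam 1) (by omega : N ≠ 0)
  have h1 : |(expSumDeriv b lam 0 1).re| ≤ S := hS 1 (right_mem_Icc.2 zero_le_one)
  have hw : ((ℓ ^ 2 - ℓ + 1 : ℕ) : ℝ) ^ 2 ≤ (ℓ : ℝ) ^ 5 := by
    exact_mod_cast sq_sub_add_one_le_pow_five hℓ
  have hℓ5 : (1 : ℝ) ≤ ℓ ^ 5 := one_le_pow₀ (by exact_mod_cast hℓ)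
  rw [Fintype.card_fin] at hTV
  calc _ ≤ 1 / (N : ℝ) * (17 * ℓ ^ 5 * S) := by
        refine hR.trans (mul_le_mul_of_nonneg_left ?_ (by positivity))
        nlinarith [(abs_nonneg _).trans h1]
    _ = 17 * (ℓ : ℝ) ^ 5 / N * S := by ring
end

section
/- For the equispaced single-cluster node set x_j = (j−1)Δ, j = 1,…,s, and any integer N with s−1 ≤ N ≤ 2π/((s−1)Δ), the smallest singular value of V_N(x) admits the upper bound σ_min(V_N(x)) ≤ (1/2)√(Nse) ((s−1)NΔ)^{s−1}. -/
/-!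
Test the Rayleigh quotient of `VᴴV` on the coefficient vector `c_j = (-1)^j (s-1 choose j)` of
`(1 - z)^(s-1)`. For equispaced nodes `(V c)_k = (1 - e^{ikΔ})^(s-1)`, which vanishes at `k = 0` and
has modulus at most `(kΔ)^(s-1)`, so `‖V c‖² ≤ N (NΔ)^(2(s-1))`, while `‖c‖² ≥ |c_0|² = 1`.
The smallest eigenvalue of a Hermitian `A` bounds its Rayleigh quotients from below because
`A - λ_min` is positive semidefinite. The resulting bound `σ_min² ≤ N (NΔ)^(2(s-1))` beats the
stated one since `4 ≤ s e (s-1)^(2(s-1))`.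
-/

/-- The `(N+1) × s` Vandermonde matrix with nodes `e^{i x_j}` on the unit circle. -/
noncomputable def vand (N : ℕ) {s : ℕ} (x : Fin s → ℝ) :
    Matrix (Fin (N + 1)) (Fin s) ℂ :=
  Matrix.of fun k j => Complex.exp (Complex.I * ((k : ℕ) : ℝ) * x j)

/-- The smallest singular value of a complex matrix. -/
noncomputable def smin {m n : Type*} [Fintype m] [Fintype n] [DecidableEq n]
    (V : Matrix m n ℂ) : ℝ :=
  Real.sqrt (⨅ i, (Matrix.isHermitian_conjTranspose_mul_self V).eigenvalues i)

open Matrix Complex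
open scoped ComplexOrder

namespace Matrix

variable {n 𝕜 : Type*} [Fintype n] [RCLike 𝕜]

lemma IsHermitian.posSemidef_sub_smul_one [DecidableEq n] {A : Matrix n n 𝕜} (hA : A.IsHermitian)
    {c : ℝ} (hc : ∀ i, c ≤ hA.eigenvalues i) : (A - (c : 𝕜) • 1).PosSemidef := by
  have hshift : A - (c : 𝕜) • 1 = Unitary.conjStarAlgAut 𝕜 _
      hA.eigenvectorUnitary (diagonal (RCLike.ofReal ∘ (hA.eigenvalues - fun _ ↦ c))) := by
    conv_lhs => rw [hA.spectral_theorem]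
    rw [← Algebra.algebraMap_eq_smul_one, ← AlgHomClass.commutes (Unitary.conjStarAlgAut 𝕜 _
      hA.eigenvectorUnitary), ← map_sub]
    congr 1
    simp [algebraMap_eq_diagonal, Pi.algebraMap_def, diagonal_sub, Function.comp_def]
  rw [hshift, Unitary.conjStarAlgAut_apply, Unitary.isUnit_coe.posSemidef_star_right_conjugate_iff]
  simpa [posSemidef_diagonal_iff, Pi.le_def] using hc

lemma re_star_dotProduct_self (x : n → 𝕜) : RCLike.re (star x ⬝ᵥ x) = ∑ i, ‖x i‖ ^ 2 := by
  simp [dotProduct, RCLike.conj_mul]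

lemma IsHermitian.mul_re_dotProduct_le [DecidableEq n] {A : Matrix n n 𝕜} (hA : A.IsHermitian)
    {c : ℝ} (hc : ∀ i, c ≤ hA.eigenvalues i) (x : n → 𝕜) :
    c * RCLike.re (star x ⬝ᵥ x) ≤ RCLike.re (star x ⬝ᵥ (A *ᵥ x)) := by
  have := (hA.posSemidef_sub_smul_one hc).re_dotProduct_nonneg x
  rwa [sub_mulVec, dotProduct_sub, map_sub, sub_nonneg, smul_mulVec, one_mulVec, dotProduct_smul,
    smul_eq_mul, RCLike.re_ofReal_mul] at this

end Matrix

lemma sq_smin_mul_le {m n : Type*} [Fintype m] [Fintype n] [DecidableEq n]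
    (V : Matrix m n ℂ) (v : n → ℂ) :
    smin V ^ 2 * ∑ j, ‖v j‖ ^ 2 ≤ ∑ k, ‖(V *ᵥ v) k‖ ^ 2 := by
  have hA := isHermitian_conjTranspose_mul_self V
  have hμ : 0 ≤ ⨅ i, hA.eigenvalues i :=
    Real.iInf_nonneg (eigenvalues_conjTranspose_mul_self_nonneg V)
  have := hA.mul_re_dotProduct_le (fun i ↦ ciInf_le (Set.finite_range _).bddBelow i) v
  rwa [← mulVec_mulVec, dotProduct_mulVec, ← star_mulVec, re_star_dotProduct_self,
    re_star_dotProduct_self, ← Real.sq_sqrt hμ] at this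

lemma vand_equispaced_apply (N : ℕ) {s : ℕ} (Δ : ℝ) (k : Fin (N + 1)) (j : Fin s) :
    vand N (fun j : Fin s => (j : ℕ) * Δ) k j = exp (I * ((k : ℕ) * Δ : ℝ)) ^ (j : ℕ) := by
  rw [vand, of_apply, ← exp_nat_mul]
  push_cast
  ring_nf

lemma vand_equispaced_mulVec_alternating_choose (N p : ℕ) (Δ : ℝ) (k : Fin (N + 1)) :
    (vand N (fun j : Fin (p + 1) => (j : ℕ) * Δ) *ᵥ fun j => (-1) ^ (j : ℕ) * (p.choose j : ℂ)) k
      = (1 - exp (I * ((k : ℕ) * Δ : ℝ))) ^ p := by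
  rw [sub_eq_neg_add, add_pow, Finset.sum_range, mulVec, dotProduct]
  refine Finset.sum_congr rfl fun j _ ↦ ?_
  rw [vand_equispaced_apply, one_pow, mul_one, neg_pow]
  ring

lemma norm_one_sub_exp_I_mul_pow_le (θ : ℝ) (p : ℕ) :
    ‖(1 - exp (I * θ)) ^ p‖ ≤ |θ| ^ p := by
  rw [norm_pow, norm_sub_rev]
  exact pow_le_pow_left₀ (norm_nonneg _) Real.norm_exp_I_mul_ofReal_sub_one_le p

lemma sum_norm_sq_one_sub_exp_I_mul_pow_le (N : ℕ) {p : ℕ} (hp : p ≠ 0) {Δ : ℝ} (hΔ : 0 ≤ Δ) :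
    ∑ k : Fin (N + 1), ‖(1 - exp (I * ((k : ℕ) * Δ : ℝ))) ^ p‖ ^ 2 ≤ N * (N * Δ) ^ (2 * p) := by
  rw [Fin.sum_univ_succ, Fin.val_zero, Nat.cast_zero, zero_mul, ofReal_zero, mul_zero, exp_zero,
    sub_self, zero_pow hp, norm_zero, zero_pow two_ne_zero, zero_add]
  calc ∑ k : Fin N, ‖(1 - exp (I * (((k.succ : ℕ) : ℝ) * Δ : ℝ))) ^ p‖ ^ 2
      ≤ ∑ _k : Fin N, (N * Δ) ^ (2 * p) := by
        refine Finset.sum_le_sum fun k _ ↦ ?_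
        rw [pow_mul']
        refine pow_le_pow_left₀ (norm_nonneg _) ((norm_one_sub_exp_I_mul_pow_le _ p).trans ?_) 2
        refine pow_le_pow_left₀ (abs_nonneg _) ?_ p
        rw [abs_of_nonneg (by positivity)]
        gcongr
        exact_mod_cast k.succ.is_le
    _ = N * (N * Δ) ^ (2 * p) := by simp

lemma sq_smin_vand_equispaced_le (N : ℕ) {p : ℕ} (hp : p ≠ 0) {Δ : ℝ} (hΔ : 0 ≤ Δ) :
    smin (vand N fun j : Fin (p + 1) => (j : ℕ) * Δ) ^ 2 ≤ N * (N * Δ) ^ (2 * p) := by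
  set V := vand N fun j : Fin (p + 1) => (j : ℕ) * Δ
  set v : Fin (p + 1) → ℂ := fun j => (-1) ^ (j : ℕ) * (p.choose j : ℂ)
  have hv : 1 ≤ ∑ j, ‖v j‖ ^ 2 :=
    calc (1 : ℝ) = ‖v 0‖ ^ 2 := by simp [v]
      _ ≤ ∑ j, ‖v j‖ ^ 2 :=
        Finset.single_le_sum (fun j _ ↦ sq_nonneg ‖v j‖) (Finset.mem_univ 0)
  have hVv : ∑ k, ‖(V *ᵥ v) k‖ ^ 2 ≤ N * (N * Δ) ^ (2 * p) := by
    simpa only [V, v, vand_equispaced_mulVec_alternating_choose]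
      using sum_norm_sq_one_sub_exp_I_mul_pow_le N hp hΔ
  calc smin V ^ 2 ≤ smin V ^ 2 * ∑ j, ‖v j‖ ^ 2 := le_mul_of_one_le_right (sq_nonneg _) hv
    _ ≤ ∑ k, ‖(V *ᵥ v) k‖ ^ 2 := sq_smin_mul_le V v
    _ ≤ N * (N * Δ) ^ (2 * p) := hVv

theorem equispaced_upper_bound_general (s N : ℕ) (Δ : ℝ) (hs : 2 ≤ s) (hΔ : 0 < Δ) :
    smin (vand N fun j : Fin s => (j : ℕ) * Δ) ≤
      (1 / 2) * Real.sqrt (N * s * Real.exp 1) *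
        (((s : ℝ) - 1) * N * Δ) ^ (s - 1) := by
  obtain ⟨p, rfl⟩ : ∃ p, s = p + 1 := ⟨s - 1, by omega⟩
  have hp : p ≠ 0 := by omega
  rw [Nat.add_sub_cancel, Nat.cast_add, Nat.cast_one, add_sub_cancel_right]
  have hfactor : 1 ≤ (p + 1) * Real.exp 1 * (p : ℝ) ^ (2 * p) / 4 := by
    have he : 2 ≤ Real.exp 1 := by linarith [Real.add_one_le_exp 1]
    have hp1 : (1 : ℝ) ≤ p := by exact_mod_cast Nat.one_le_iff_ne_zero.2 hp
    have hpow : 1 ≤ (p : ℝ) ^ (2 * p) := one_le_pow₀ hp1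
    rw [le_div_iff₀ four_pos]
    calc 1 * 4 = (1 + 1) * 2 * (1 : ℝ) := by norm_num
      _ ≤ (p + 1) * Real.exp 1 * (p : ℝ) ^ (2 * p) := by gcongr
  refine (pow_le_pow_iff_left₀ (Real.sqrt_nonneg _) (by positivity) two_ne_zero).mp ?_
  calc _ ≤ N * (N * Δ) ^ (2 * p) := sq_smin_vand_equispaced_le N hp hΔ.le
    _ ≤ N * (N * Δ) ^ (2 * p) * ((p + 1) * Real.exp 1 * (p : ℝ) ^ (2 * p) / 4) :=
      le_mul_of_one_le_right (by positivity) hfactor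
    _ = _ := by
      rw [mul_pow _ (_ ^ p), mul_pow (1 / 2 : ℝ), Real.sq_sqrt (by positivity), ← pow_mul]
      ring

/-- **Upper bound for the equispaced single cluster**: for the nodes `x_j = (j−1)Δ`,
`j = 1,…,s`, and any integer `N` with `s−1 ≤ N ≤ 2π/((s−1)Δ)`,
`σ_min(V_N(x)) ≤ (1/2)√(Nse)((s−1)NΔ)^{s−1}`. -/
theorem equispaced_upper_bound (s N : ℕ) (Δ : ℝ) (hs : 2 ≤ s) (hΔ : 0 < Δ)
    (hN1 : (s : ℝ) - 1 ≤ N) (hN2 : (N : ℝ) ≤ 2 * Real.pi / (((s : ℝ) - 1) * Δ)) :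
    smin (vand N fun j : Fin s => (j : ℕ) * Δ) ≤
      (1 / 2) * Real.sqrt (N * s * Real.exp 1) *
        (((s : ℝ) - 1) * N * Δ) ^ (s - 1) :=
  equispaced_upper_bound_general s N Δ hs hΔ
end
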